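/- arXiv:2307.13094 — 6 statements merged into one kernel-verified Lean document; each statement's English description precedes it below -/
import Mathlib

section
/- Under Assumption 1 on Q and Assumptions 2–3 on the treatment assignment mechanism, φ̂_n(a) = (1/n)Σ_{i: A_i = a} D_i converges in probability to E[D_i(a)] for a ∈ {0,1}, and consequently φ̂_n(1) − φ̂_n(0) converges in probability to P(C_i = 1). -/
open MeasureTheory ProbabilityTheory Filter Matrix
open scoped Classical ENNReal NNReal

noncomputable section

namespace MPIV

/-- Real-valued indicator of a proposition. -/
def ind (p : Prop) : ℝ := if p then 1 else 0

/-- Covariate space `ℝ^k` with the Euclidean (`ℓ²`) norm. -/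
abbrev Ex (k : ℕ) := EuclideanSpace ℝ (Fin k)

/-- The data of a matched-pairs experiment with imperfect compliance: an i.i.d. sequence of
potential outcomes `Y1 i, Y0 i`, potential take-up decisions `D1 i, D0 i`, covariates
`X i, W i`, and, for every number of pairs `n`, the treatment assignments `A n i`,
`i < 2n`, and the pairing permutation `π n` of `{0, …, 2n−1}` (a function of `X^{(n)}`). -/
structure Data (Ω : Type*) (kx kw : ℕ) where
  Y1 : ℕ → Ω → ℝ
  Y0 : ℕ → Ω → ℝ
  D1 : ℕ → Ω → ℝ
  D0 : ℕ → Ω → ℝ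
  X : ℕ → Ω → Ex kx
  W : ℕ → Ω → Ex kw
  A : ℕ → ℕ → Ω → ℝ
  π : ℕ → Ω → ℕ → ℕ

namespace Data

variable {Ω : Type*} [m0 : MeasurableSpace Ω] {kx kw : ℕ}
variable (d : Data Ω kx kw) (P : Measure Ω)

/-- The complier event `{D_i(1) = 1, D_i(0) = 0}` (for the representative unit `i = 0`). -/
def cEvent : Set Ω := {ω | d.D1 0 ω = 1 ∧ d.D0 0 ω = 0}

/-- `P(C_i = 1)`. -/
def pC : ℝ := (P d.cEvent).toReal

/-- The local average treatment effect `Δ(Q) = E[Y_i(1) − Y_i(0) | C_i = 1]`. -/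
def LATE : ℝ :=
  (∫ ω, (d.Y1 0 ω - d.Y0 0 ω) * ind (d.D1 0 ω = 1 ∧ d.D0 0 ω = 0) ∂P) / d.pC P

/-- Potential take-up `D_i(a)`, with `a : Bool` coding `a = 1 ↔ true`. -/
def Dpo (a : Bool) : ℕ → Ω → ℝ := if a then d.D1 else d.D0

/-- Intention-to-treat potential outcome `Ỹ_i(a) = Y_i(1)D_i(a) + Y_i(0)(1 − D_i(a))`. -/
def tY (a : Bool) (i : ℕ) : Ω → ℝ :=
  fun ω => d.Y1 i ω * d.Dpo a i ω + d.Y0 i ω * (1 - d.Dpo a i ω)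

/-- Transformed potential outcome `Y*_i(a) = Ỹ_i(a) − Δ(Q)·D_i(a)`. -/
def Ystar (a : Bool) (i : ℕ) : Ω → ℝ :=
  fun ω => d.tY a i ω - d.LATE P * d.Dpo a i ω

/-- `σ(X_i)`. -/
def mX (i : ℕ) : MeasurableSpace Ω := MeasurableSpace.comap (d.X i) inferInstance

/-- `σ(X_i, W_i)`. -/
def mXW (i : ℕ) : MeasurableSpace Ω :=
  MeasurableSpace.comap (fun ω => (d.X i ω, d.W i ω)) inferInstance

/-- `σ(X^{(n)}) = σ(X_1, …, X_{2n})`. -/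
def mXn (n : ℕ) : MeasurableSpace Ω :=
  MeasurableSpace.comap (fun ω (i : Fin (2 * n)) => d.X (i : ℕ) ω) inferInstance

/-- The limiting variance `ν²` of the Wald estimator, with `E[Var[·|X_i]]` written in its
equivalent form `E[(· − E[·|X_i])²]`. -/
def nuSq : ℝ :=
  (d.pC P)⁻¹ ^ 2 *
    ((∫ ω, (d.Ystar P true 0 ω - (P[d.Ystar P true 0|d.mX 0]) ω) ^ 2 ∂P)
      + (∫ ω, (d.Ystar P false 0 ω - (P[d.Ystar P false 0|d.mX 0]) ω) ^ 2 ∂P)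
      + (1 / 2) * ∫ ω, (((P[d.Ystar P true 0|d.mX 0]) ω - ∫ x, d.Ystar P true 0 x ∂P)
          - ((P[d.Ystar P false 0|d.mX 0]) ω - ∫ x, d.Ystar P false 0 x ∂P)) ^ 2 ∂P)

/-- Observed take-up `D_i = D_i(1)A_i + D_i(0)(1 − A_i)` (in the design with `n` pairs). -/
def Dobs (n i : ℕ) : Ω → ℝ :=
  fun ω => d.D1 i ω * d.A n i ω + d.D0 i ω * (1 - d.A n i ω)

/-- Observed outcome `Y_i = Y_i(1)D_i + Y_i(0)(1 − D_i)`. -/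
def Yobs (n i : ℕ) : Ω → ℝ :=
  fun ω => d.Y1 i ω * d.Dobs n i ω + d.Y0 i ω * (1 - d.Dobs n i ω)

/-- `ψ̂_n(a) = n⁻¹ Σ_{i : A_i = a} Y_i`. -/
def psiHat (n : ℕ) (a : ℝ) : Ω → ℝ :=
  fun ω => (n : ℝ)⁻¹ * ∑ i ∈ Finset.range (2 * n), ind (d.A n i ω = a) * d.Yobs n i ω

/-- `φ̂_n(a) = n⁻¹ Σ_{i : A_i = a} D_i`. -/
def phiHat (n : ℕ) (a : ℝ) : Ω → ℝ :=
  fun ω => (n : ℝ)⁻¹ * ∑ i ∈ Finset.range (2 * n), ind (d.A n i ω = a) * d.Dobs n i ω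

/-- The Wald (two-stage least squares) estimator `Δ̂_n`. -/
def wald (n : ℕ) : Ω → ℝ :=
  fun ω => (d.psiHat n 1 ω - d.psiHat n 0 ω) / (d.phiHat n 1 ω - d.phiHat n 0 ω)

/-- The tuple of unit-level primitives whose i.i.d. structure is assumed. -/
def tuple (i : ℕ) : Ω → ℝ × ℝ × ℝ × ℝ × Ex kx × Ex kw :=
  fun ω => (d.Y1 i ω, d.Y0 i ω, d.D1 i ω, d.D0 i ω, d.X i ω, d.W i ω)

/-- The units `(Y_i(1), Y_i(0), D_i(1), D_i(0), X_i, W_i)`, `i ∈ ℕ`, are i.i.d. with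
common distribution `Q` (represented by unit `0`), and take-up is `{0,1}`-valued. -/
structure IID : Prop where
  meas : ∀ i, Measurable (d.tuple i)
  indep : iIndepFun d.tuple P
  ident : ∀ i, IdentDistrib (d.tuple i) (d.tuple 0) P P
  bin1 : ∀ᵐ ω ∂P, d.D1 0 ω = 0 ∨ d.D1 0 ω = 1
  bin0 : ∀ᵐ ω ∂P, d.D0 0 ω = 0 ∨ d.D0 0 ω = 1

/-- Assumption 2.1 of the paper (restrictions on `Q`). -/
structure Assumption1 : Prop where
  posVar : ∀ a : Bool,
    0 < ∫ ω, (d.Ystar P a 0 ω - (P[d.Ystar P a 0|d.mX 0]) ω) ^ 2 ∂P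
  sqInt1 : MemLp (d.Y1 0) 2 P
  sqInt0 : MemLp (d.Y0 0) 2 P
  lip1 : ∀ a : Bool, ∀ r ∈ Finset.range 3, ∃ (K : ℝ≥0) (g : Ex kx → ℝ),
    LipschitzWith K g ∧
      (P[fun ω => (d.Y1 0 ω) ^ r * d.Dpo a 0 ω|d.mX 0]) =ᵐ[P] fun ω => g (d.X 0 ω)
  lip0 : ∀ a : Bool, ∀ r ∈ Finset.range 3, ∃ (K : ℝ≥0) (g : Ex kx → ℝ),
    LipschitzWith K g ∧
      (P[fun ω => (d.Y0 0 ω) ^ r * (1 - d.Dpo a 0 ω)|d.mX 0]) =ᵐ[P] fun ω => g (d.X 0 ω)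
  mono : ∀ᵐ ω ∂P, d.D0 0 ω ≤ d.D1 0 ω
  relev : 0 < P d.cEvent


/-- Assumption 2.2 of the paper: the mechanism determining treatment assignment.
The pairing `π n` is a permutation of `{0, …, 2n−1}` measurable with respect to
`σ(X^{(n)})`; conditionally on `X^{(n)}`, the assignment vector is independent of the
potential outcomes, take-up decisions and `W`; within pairs `(A_{π(2j)}, A_{π(2j+1)})`,
`j < n`, are i.i.d. uniform on `{(0,1), (1,0)}` conditionally on `X^{(n)}` (expressed via
the conditional probabilities of all finite configurations). -/
structure Assumption2 [StandardBorelSpace Ω] [IsFiniteMeasure P] : Prop where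
  hle : ∀ n, d.mXn n ≤ m0
  Ameas : ∀ n i, Measurable (d.A n i)
  Abin : ∀ n, ∀ i < 2 * n, ∀ᵐ ω ∂P, d.A n i ω = 0 ∨ d.A n i ω = 1
  πmeas : ∀ n i, Measurable[d.mXn n] fun ω => d.π n ω i
  πperm : ∀ n ω, Set.BijOn (d.π n ω) (Set.Iio (2 * n)) (Set.Iio (2 * n))
  condIndep : ∀ n, CondIndepFun (d.mXn n) (hle n)
    (fun ω (i : Fin (2 * n)) =>
      (d.Y1 (i : ℕ) ω, d.Y0 (i : ℕ) ω, d.D1 (i : ℕ) ω, d.D0 (i : ℕ) ω, d.W (i : ℕ) ω))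
    (fun ω (i : Fin (2 * n)) => d.A n (i : ℕ) ω) P
  pairUnif : ∀ n, ∀ S : Finset (Fin n), ∀ g : Fin n → Bool,
    (P[fun ω => ∏ j ∈ S,
        ind (d.A n (d.π n ω (2 * (j : ℕ))) ω = (if g j then 1 else 0)
          ∧ d.A n (d.π n ω (2 * (j : ℕ) + 1)) ω = (if g j then 0 else 1))|d.mXn n])
      =ᵐ[P] fun _ => (1 / 2 : ℝ) ^ S.card

/-- Assumption 2.3 of the paper: units within pairs are close in covariates,
`n⁻¹ Σ_j ‖X_{π(2j)} − X_{π(2j−1)}‖₂^r → 0` in probability for `r ∈ {1, 2}`. -/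
def Assumption3 : Prop := ∀ r ∈ Finset.Icc 1 2,
  TendstoInMeasure P
    (fun (n : ℕ) (ω : Ω) => (n : ℝ)⁻¹ * ∑ j ∈ Finset.range n,
      ‖d.X (d.π n ω (2 * j + 1)) ω - d.X (d.π n ω (2 * j)) ω‖ ^ r)
    atTop (fun _ => (0 : ℝ))

/-- Assumption 2.4 of the paper: units in adjacent pairs are close in covariates,
`n⁻¹ Σ_{j ≤ ⌊n/2⌋} ‖X_{π(4j−k)} − X_{π(4j−l)}‖₂² → 0` in probability for
`k ∈ {2,3}`, `l ∈ {0,1}` (written with `0`-based indices). -/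
def Assumption4 : Prop := ∀ k ∈ ({2, 3} : Set ℕ), ∀ l ∈ ({0, 1} : Set ℕ),
  TendstoInMeasure P
    (fun (n : ℕ) (ω : Ω) => (n : ℝ)⁻¹ * ∑ j ∈ Finset.range (n / 2),
      ‖d.X (d.π n ω (4 * j + 3 - k)) ω - d.X (d.π n ω (4 * j + 3 - l)) ω‖ ^ 2)
    atTop (fun _ => (0 : ℝ))

end Data

/-- Convergence in distribution of the real statistics `T n` to `N(0, v)`, expressed through
pointwise convergence of the cumulative distribution functions. -/
def TendstoGaussian {Ω : Type*} [MeasurableSpace Ω] (P : Measure Ω)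
    (T : ℕ → Ω → ℝ) (v : ℝ) : Prop :=
  ∀ t : ℝ, Filter.Tendsto (fun n => (P {ω | T n ω ≤ t}).toReal) Filter.atTop
    (nhds ((ProbabilityTheory.gaussianReal 0 v.toNNReal) (Set.Iic t)).toReal)

end MPIV

namespace MPIV

open MeasureTheory ProbabilityTheory Filter
open Topology

/-! ### Auxiliary lemmas on the indicator `ind` -/

section IndLemmas

lemma ind_nonneg' {p : Prop} : (0:ℝ) ≤ ind p := by
  unfold ind; split <;> norm_num

lemma ind_le_one' {p : Prop} : ind p ≤ 1 := by
  unfold ind; split <;> norm_num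

lemma ind_of {p : Prop} (h : p) : ind p = 1 := if_pos h

lemma ind_of_not {p : Prop} (h : ¬ p) : ind p = 0 := if_neg h

lemma ind_mem {p : Prop} : ind p = 0 ∨ ind p = 1 := by
  unfold ind; split <;> simp

lemma ind_eq_one_iff {p : Prop} : ind p = 1 ↔ p := by
  unfold ind; split <;> simp [*]

lemma ind_congr {p q : Prop} (h : p ↔ q) : ind p = ind q := by
  unfold ind; simp only [h]

lemma ind_mul_ind (p q : Prop) : ind p * ind q = ind (p ∧ q) := by
  unfold ind
  by_cases hp : p <;> by_cases hq : q <;> simp [hp, hq]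

lemma abs_ind_le_one {p : Prop} : |ind p| ≤ 1 := by
  rw [abs_le]
  exact ⟨by linarith [ind_nonneg' (p := p)], ind_le_one'⟩

lemma indicator_eq_ind {Ω : Type*} (s : Set Ω) (ω : Ω) :
    s.indicator (fun _ => (1:ℝ)) ω = ind (ω ∈ s) := by
  by_cases h : ω ∈ s <;> simp [Set.indicator_apply, h, ind]

lemma measurable_ind {Ω : Type*} {m : MeasurableSpace Ω} {p : Ω → Prop}
    (hp : MeasurableSet[m] {ω | p ω}) : Measurable[m] fun ω => ind (p ω) := by
  have h : (fun ω => ind (p ω)) = Set.indicator {ω | p ω} (fun _ => (1:ℝ)) := by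
    funext ω; by_cases h : p ω <;> simp [Set.indicator_apply, h, ind]
  rw [h]
  exact measurable_const.indicator hp

lemma measurableSet_eq_c {Ω : Type*} {m : MeasurableSpace Ω} {β : Type*} [MeasurableSpace β]
    [MeasurableSingletonClass β] {f : Ω → β} (hf : Measurable[m] f) (c : β) :
    MeasurableSet[m] {ω | f ω = c} := by
  have h := hf (measurableSet_singleton c)
  simpa [Set.preimage, Set.mem_singleton_iff] using h

end IndLemmas

/-! ### Generic measure-theoretic helpers -/

section MeasHelpers

variable {Ω : Type*} [m0 : MeasurableSpace Ω] {P : Measure Ω}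

lemma integrable_of_bdd [IsFiniteMeasure P] {f : Ω → ℝ} {C : ℝ}
    (hf : AEStronglyMeasurable f P) (h : ∀ᵐ ω ∂P, |f ω| ≤ C) : Integrable f P :=
  ⟨hf, HasFiniteIntegral.of_bounded (C := C) (by simpa [Real.norm_eq_abs] using h)⟩

lemma ae_sum_congr {ι : Type*} (s : Finset ι) {f g : ι → Ω → ℝ}
    (h : ∀ i ∈ s, f i =ᵐ[P] g i) :
    (fun ω => ∑ i ∈ s, f i ω) =ᵐ[P] (fun ω => ∑ i ∈ s, g i ω) := by
  have h' : ∀ᵐ ω ∂P, ∀ i ∈ s, f i ω = g i ω := (Filter.eventually_all_finset s).2 h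
  filter_upwards [h'] with ω hω using Finset.sum_congr rfl hω

lemma ae_sum_le {ι : Type*} (s : Finset ι) {f g : ι → Ω → ℝ}
    (h : ∀ i ∈ s, f i ≤ᵐ[P] g i) :
    (fun ω => ∑ i ∈ s, f i ω) ≤ᵐ[P] (fun ω => ∑ i ∈ s, g i ω) := by
  have h' : ∀ᵐ ω ∂P, ∀ i ∈ s, f i ω ≤ g i ω := (Filter.eventually_all_finset s).2 h
  filter_upwards [h'] with ω hω using Finset.sum_le_sum hω

/-- Chebyshev-type sufficient condition for convergence in probability. -/
lemma tendstoInMeasure_of_sq_integral {f : ℕ → Ω → ℝ} {c : ℝ}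
    (hmeas : ∀ n, AEStronglyMeasurable (f n) P)
    (hint : ∀ n, Integrable (fun ω => (f n ω - c)^2) P)
    (hb : ∀ n, 1 ≤ n → ∫ ω, (f n ω - c)^2 ∂P ≤ 1 / n) :
    TendstoInMeasure P f atTop (fun _ => c) := by
  rw [tendstoInMeasure_iff_dist]
  intro ε hε
  have hb' : ∀ n, 1 ≤ n → P {ω | ε ≤ dist (f n ω) c}
      ≤ ENNReal.ofReal (1/(n:ℝ)) / ENNReal.ofReal (ε^2) := by
    intro n hn
    have hsub : {ω | ε ≤ dist (f n ω) c}
        ⊆ {ω | ENNReal.ofReal (ε^2) ≤ ENNReal.ofReal ((f n ω - c)^2)} := by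
      intro ω hω
      simp only [Set.mem_setOf_eq] at *
      refine ENNReal.ofReal_le_ofReal ?_
      have h1 : ε ≤ |f n ω - c| := by rwa [Real.dist_eq] at hω
      calc ε^2 ≤ |f n ω - c|^2 := by
            exact pow_le_pow_left₀ hε.le h1 2
        _ = (f n ω - c)^2 := sq_abs _
    have hae : AEMeasurable (fun ω => ENNReal.ofReal ((f n ω - c)^2)) P := by
      refine ENNReal.measurable_ofReal.comp_aemeasurable ?_
      exact (((hmeas n).aemeasurable.sub aemeasurable_const).pow_const 2)
    refine le_trans (measure_mono hsub) ?_
    refine le_trans (meas_ge_le_lintegral_div hae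
      (by simp [ENNReal.ofReal_pos]; positivity) ENNReal.ofReal_ne_top) ?_
    rw [← ofReal_integral_eq_lintegral_ofReal (hint n) (ae_of_all _ fun ω => sq_nonneg _)]
    exact ENNReal.div_le_div_right (ENNReal.ofReal_le_ofReal (hb n hn)) _
  have h0 : Tendsto (fun n : ℕ => ENNReal.ofReal (1/(n:ℝ)) / ENNReal.ofReal (ε^2))
      atTop (𝓝 0) := by
    have h1 : Tendsto (fun n : ℕ => ENNReal.ofReal (1/(n:ℝ))) atTop (𝓝 0) := by
      rw [show (0:ℝ≥0∞) = ENNReal.ofReal 0 by simp]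
      exact (ENNReal.continuous_ofReal.tendsto 0).comp tendsto_one_div_atTop_nhds_zero_nat
    have h2 := ENNReal.Tendsto.div_const h1
      (Or.inr (ENNReal.ofReal_pos.2 (by positivity : (0:ℝ) < ε^2)).ne')
    simpa using h2
  refine tendsto_of_tendsto_of_tendsto_of_le_of_le' tendsto_const_nhds h0
    (Eventually.of_forall fun n => zero_le) ?_
  filter_upwards [eventually_ge_atTop 1] with n hn using hb' n hn

/-- Difference of limits in probability. -/
lemma tendstoInMeasure_sub {f g : ℕ → Ω → ℝ} {c c' : ℝ}
    (hf : TendstoInMeasure P f atTop (fun _ => c))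
    (hg : TendstoInMeasure P g atTop (fun _ => c')) :
    TendstoInMeasure P (fun n ω => f n ω - g n ω) atTop (fun _ => c - c') := by
  rw [tendstoInMeasure_iff_dist]
  intro ε hε
  have h2 : 0 < ε/2 := by positivity
  have key : ∀ n, P {ω | ε ≤ dist (f n ω - g n ω) (c - c')}
      ≤ P {ω | ε/2 ≤ dist (f n ω) c} + P {ω | ε/2 ≤ dist (g n ω) c'} := by
    intro n
    refine le_trans (measure_mono ?_) (measure_union_le _ _)
    intro ω hω
    simp only [Set.mem_setOf_eq] at hω
    by_contra hc
    simp only [Set.mem_union, Set.mem_setOf_eq, not_or, not_le] at hc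
    obtain ⟨hc1, hc2⟩ := hc
    rw [Real.dist_eq] at hω hc1 hc2
    have htri : |f n ω - g n ω - (c - c')| ≤ |f n ω - c| + |g n ω - c'| := by
      calc |f n ω - g n ω - (c - c')| = |(f n ω - c) - (g n ω - c')| := by ring_nf
        _ ≤ |f n ω - c| + |g n ω - c'| := abs_sub _ _
    linarith
  have hlim : Tendsto (fun n => P {ω | ε/2 ≤ dist (f n ω) c}
      + P {ω | ε/2 ≤ dist (g n ω) c'}) atTop (𝓝 0) := by
    have := Tendsto.add (tendstoInMeasure_iff_dist.1 hf (ε/2) h2) (tendstoInMeasure_iff_dist.1 hg (ε/2) h2)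
    simpa using this
  refine tendsto_of_tendsto_of_tendsto_of_le_of_le' tendsto_const_nhds hlim
    (Eventually.of_forall fun n => zero_le) (Eventually.of_forall key)

end MeasHelpers

/-! ### The pairing machinery -/

section PairCore

variable {Ω : Type*} [m0 : MeasurableSpace Ω] {kx kw : ℕ}

/-- The assignment at slot `k` of the pairing. -/
def Api (d : Data Ω kx kw) (n k : ℕ) : Ω → ℝ := fun ω => d.A n (d.π n ω k) ω

/-- The partner slot of slot `k`. -/
def pr (k : ℕ) : ℕ := if k % 2 = 0 then k + 1 else k - 1

/-- The indicator that slot `k` got treatment and its partner did not. -/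
def rr (d : Data Ω kx kw) (n k : ℕ) : Ω → ℝ :=
  fun ω => ind (Api d n k ω = 1 ∧ Api d n (pr k) ω = 0)

/-- The indicator that slot `k` hosts unit `i`. -/
def chi (d : Data Ω kx kw) (n k i : ℕ) : Ω → ℝ := fun ω => ind (d.π n ω k = i)

/-- `rho true` = slot treated, `rho false` = partner treated. -/
def rho (d : Data Ω kx kw) (a : Bool) (n k : ℕ) : Ω → ℝ :=
  if a then rr d n k else rr d n (pr k)

lemma pr_lt {k n : ℕ} (h : k < 2*n) : pr k < 2*n := by unfold pr; split <;> omega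

lemma rho_true {Ω' : Type*} (d : Data Ω' kx kw) (n k : ℕ) : rho d true n k = rr d n k := if_pos rfl

lemma rho_false {Ω' : Type*} (d : Data Ω' kx kw) (n k : ℕ) :
    rho d false n k = rr d n (pr k) := if_neg Bool.false_ne_true

lemma pr_div (k : ℕ) : pr k / 2 = k / 2 := by unfold pr; split <;> omega

lemma k_split (k : ℕ) : k = 2*(k/2) ∨ k = 2*(k/2)+1 := by omega

lemma rr_nonneg {d : Data Ω kx kw} {n k : ℕ} (ω : Ω) : 0 ≤ rr d n k ω := ind_nonneg'

lemma rr_le_one {d : Data Ω kx kw} {n k : ℕ} (ω : Ω) : rr d n k ω ≤ 1 := ind_le_one'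

lemma rr_mul_pr (d : Data Ω kx kw) (n k : ℕ) (ω : Ω) :
    rr d n k ω * rr d n (pr k) ω = 0 := by
  rw [rr, rr, ind_mul_ind]
  refine ind_of_not ?_
  rintro ⟨⟨h1, h2⟩, ⟨h3, h4⟩⟩
  rw [h2] at h3
  norm_num at h3

lemma rho_nonneg {d : Data Ω kx kw} {a : Bool} {n k : ℕ} (ω : Ω) : 0 ≤ rho d a n k ω := by
  cases a <;> simp [rho] <;> exact ind_nonneg'

lemma rho_le_one {d : Data Ω kx kw} {a : Bool} {n k : ℕ} (ω : Ω) : rho d a n k ω ≤ 1 := by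
  cases a <;> simp [rho] <;> exact ind_le_one'

lemma rho_mul_same (d : Data Ω kx kw) (a : Bool) (n : ℕ) {k k' : ℕ}
    (hkk : k/2 = k'/2) (hne : k ≠ k') (ω : Ω) :
    rho d a n k ω * rho d a n k' ω = 0 := by
  have hk' : k' = pr k := by unfold pr; split <;> omega
  subst hk'
  cases a
  · rw [rho_false, rho_false]
    exact rr_mul_pr d n (pr k) ω
  · rw [rho_true, rho_true]
    exact rr_mul_pr d n k ω

/-- Pattern form of `rr`. -/
lemma rr_pattern (d : Data Ω kx kw) (n k : ℕ) (ω : Ω) :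
    rr d n k ω = ind (Api d n (2*(k/2)) ω = (if decide (k % 2 = 0) then (1:ℝ) else 0)
      ∧ Api d n (2*(k/2)+1) ω = (if decide (k % 2 = 0) then (0:ℝ) else 1)) := by
  rcases Nat.mod_two_eq_zero_or_one k with hpar | hpar
  · have h1 : 2*(k/2) = k := by omega
    have h2 : pr k = k + 1 := by unfold pr; rw [if_pos hpar]
    have hb : decide (k % 2 = 0) = true := by simp [hpar]
    rw [if_pos hb, if_pos hb]
    simp only [rr, h2, h1]
  · have h1 : 2*(k/2)+1 = k := by omega
    have h2 : pr k = 2*(k/2) := by unfold pr; split <;> omega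
    have hb : ¬ (decide (k % 2 = 0) = true) := by simp [hpar]
    rw [if_neg hb, if_neg hb]
    calc rr d n k ω = ind (Api d n k ω = 1 ∧ Api d n (2*(k/2)) ω = 0) := by
          simp only [rr, h2]
      _ = ind (Api d n (2*(k/2)) ω = 0 ∧ Api d n k ω = 1) := ind_congr and_comm
      _ = ind (Api d n (2*(k/2)) ω = 0 ∧ Api d n (2*(k/2)+1) ω = 1) := by rw [h1]

section WithAssumptions

variable [StandardBorelSpace Ω] {d : Data Ω kx kw} {P : Measure Ω} [IsProbabilityMeasure P]

lemma meas_pi (h2 : d.Assumption2 P) (n k : ℕ) : Measurable fun ω => d.π n ω k :=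
  (h2.πmeas n k).mono (h2.hle n) le_rfl

lemma meas_chi_m (h2 : d.Assumption2 P) (n k i : ℕ) :
    Measurable[d.mXn n] (chi d n k i) :=
  measurable_ind (measurableSet_eq_c (h2.πmeas n k) i)

lemma meas_chi (h2 : d.Assumption2 P) (n k i : ℕ) : Measurable (chi d n k i) :=
  measurable_ind (measurableSet_eq_c (meas_pi h2 n k) i)

lemma sum_chi (h2 : d.Assumption2 P) {n i : ℕ} (hi : i < 2*n) (ω : Ω) :
    ∑ k ∈ Finset.range (2*n), chi d n k i ω = 1 := by
  obtain ⟨k0, hk0m, hk0⟩ := (h2.πperm n ω).surjOn (Set.mem_Iio.2 hi)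
  rw [Finset.sum_eq_single_of_mem k0 (Finset.mem_range.2 hk0m)]
  · exact ind_of hk0
  · intro k hk hne
    refine ind_of_not ?_
    intro h
    exact hne ((h2.πperm n ω).injOn (Set.mem_Iio.2 (Finset.mem_range.1 hk)) hk0m
      (h.trans hk0.symm))

lemma meas_Api (h2 : d.Assumption2 P) {n k : ℕ} (hk : k < 2*n) : Measurable (Api d n k) := by
  have heq : Api d n k = fun ω => ∑ l ∈ Finset.range (2*n), ind (d.π n ω k = l) * d.A n l ω := by
    funext ω
    have hπ : d.π n ω k < 2*n := Set.mem_Iio.1 ((h2.πperm n ω).mapsTo (Set.mem_Iio.2 hk))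
    rw [Finset.sum_eq_single_of_mem (d.π n ω k) (Finset.mem_range.2 hπ)]
    · rw [ind_of rfl, one_mul]; rfl
    · intro l _ hl
      have hne : ¬ (d.π n ω k = l) := fun h => hl h.symm
      rw [ind_of_not hne, zero_mul]
  rw [heq]
  exact Finset.measurable_sum _ fun l _ =>
    (measurable_ind (measurableSet_eq_c (meas_pi h2 n k) l)).mul (h2.Ameas n l)

lemma meas_rr (h2 : d.Assumption2 P) {n k : ℕ} (hk : k < 2*n) : Measurable (rr d n k) := by
  refine measurable_ind ?_
  exact (measurableSet_eq_c (meas_Api h2 hk) 1).inter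
    (measurableSet_eq_c (meas_Api h2 (pr_lt hk)) 0)

lemma meas_rho (h2 : d.Assumption2 P) (a : Bool) {n k : ℕ} (hk : k < 2*n) :
    Measurable (rho d a n k) := by
  cases a
  · rw [rho_false]; exact meas_rr h2 (pr_lt hk)
  · rw [rho_true]; exact meas_rr h2 hk

lemma int_rr (h2 : d.Assumption2 P) {n k : ℕ} (hk : k < 2*n) : Integrable (rr d n k) P :=
  integrable_of_bdd (meas_rr h2 hk).aestronglyMeasurable (ae_of_all _ fun ω => abs_ind_le_one)

lemma int_rho (h2 : d.Assumption2 P) (a : Bool) {n k : ℕ} (hk : k < 2*n) :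
    Integrable (rho d a n k) P := by
  cases a
  · rw [rho_false]; exact int_rr h2 (pr_lt hk)
  · rw [rho_true]; exact int_rr h2 hk

/-- Conditional expectation of the pattern indicator `rr` is `1/2`. -/
lemma condexp_rr (h2 : d.Assumption2 P) {n k : ℕ} (hk : k < 2*n) :
    P[rr d n k|d.mXn n] =ᵐ[P] fun _ => (1/2 : ℝ) := by
  have hjn : k / 2 < n := by omega
  have h := h2.pairUnif n {(⟨k/2, hjn⟩ : Fin n)} (fun _ => decide (k % 2 = 0))
  rw [Finset.card_singleton, pow_one] at h
  have hfun : (fun ω => ∏ j' ∈ ({(⟨k/2, hjn⟩ : Fin n)} : Finset (Fin n)),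
      ind (d.A n (d.π n ω (2 * (j' : ℕ))) ω
          = (if (fun _ => decide (k % 2 = 0)) j' then (1:ℝ) else 0)
        ∧ d.A n (d.π n ω (2 * (j' : ℕ) + 1)) ω
          = (if (fun _ => decide (k % 2 = 0)) j' then (0:ℝ) else 1)))
      = rr d n k := by
    funext ω
    rw [Finset.prod_singleton, rr_pattern d n k ω]
    rfl
  rw [hfun] at h
  exact h

/-- Conditional expectation of the product of two pattern indicators in distinct pairs. -/
lemma condexp_rr_mul (h2 : d.Assumption2 P) {n k k' : ℕ} (hk : k < 2*n) (hk' : k' < 2*n)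
    (hne : k/2 ≠ k'/2) :
    P[fun ω => rr d n k ω * rr d n k' ω|d.mXn n] =ᵐ[P] fun _ => (1/4 : ℝ) := by
  have hj : k/2 < n := by omega
  have hj' : k'/2 < n := by omega
  set j1 : Fin n := ⟨k/2, hj⟩ with hj1
  set j2 : Fin n := ⟨k'/2, hj'⟩ with hj2
  have h12 : j1 ≠ j2 := by
    simp only [hj1, hj2, ne_eq, Fin.mk.injEq]
    exact hne
  set g : Fin n → Bool := fun j => if j = j1 then decide (k % 2 = 0) else decide (k' % 2 = 0)
    with hg
  have h := h2.pairUnif n {j1, j2} g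
  rw [Finset.card_pair h12] at h
  have h14 : ((1:ℝ)/2)^2 = 1/4 := by norm_num
  rw [h14] at h
  have hfun : (fun ω => ∏ j' ∈ ({j1, j2} : Finset (Fin n)),
      ind (d.A n (d.π n ω (2 * (j' : ℕ))) ω = (if g j' then (1:ℝ) else 0)
        ∧ d.A n (d.π n ω (2 * (j' : ℕ) + 1)) ω = (if g j' then (0:ℝ) else 1)))
      = fun ω => rr d n k ω * rr d n k' ω := by
    funext ω
    rw [Finset.prod_pair h12]
    have hgj1 : g j1 = decide (k % 2 = 0) := by rw [hg]; simp
    have hgj2 : g j2 = decide (k' % 2 = 0) := by rw [hg]; simp [h12.symm]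
    rw [hgj1, hgj2, rr_pattern d n k ω, rr_pattern d n k' ω]
    rfl
  rw [hfun] at h
  exact h

lemma condexp_rho (h2 : d.Assumption2 P) (a : Bool) {n k : ℕ} (hk : k < 2*n) :
    P[rho d a n k|d.mXn n] =ᵐ[P] fun _ => (1/2 : ℝ) := by
  cases a
  · rw [rho_false]; exact condexp_rr h2 (pr_lt hk)
  · rw [rho_true]; exact condexp_rr h2 hk

lemma condexp_rho_mul (h2 : d.Assumption2 P) (a : Bool) {n k k' : ℕ} (hk : k < 2*n)
    (hk' : k' < 2*n) (hne : k/2 ≠ k'/2) :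
    P[fun ω => rho d a n k ω * rho d a n k' ω|d.mXn n] =ᵐ[P] fun _ => (1/4 : ℝ) := by
  cases a
  · rw [rho_false, rho_false]
    refine condexp_rr_mul h2 (pr_lt hk) (pr_lt hk') ?_
    rw [pr_div, pr_div]; exact hne
  · rw [rho_true, rho_true]; exact condexp_rr_mul h2 hk hk' hne

/-- Within each pair, exactly one of the two pattern indicators holds, a.s. -/
lemma rr_add_pr_ae (h2 : d.Assumption2 P) {n j : ℕ} (hj : j < n) :
    ∀ᵐ ω ∂P, rr d n (2*j) ω + rr d n (2*j+1) ω = 1 := by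
  have hk : 2*j < 2*n := by omega
  have hk1 : 2*j+1 < 2*n := by omega
  have hint1 := int_rr h2 hk
  have hint2 := int_rr h2 hk1
  have hce : P[fun ω => rr d n (2*j) ω + rr d n (2*j+1) ω|d.mXn n] =ᵐ[P] fun _ => (1:ℝ) := by
    have hadd := condExp_add (μ := P) (m := d.mXn n) hint1 hint2
    have heq : (fun ω => rr d n (2*j) ω + rr d n (2*j+1) ω)
        = rr d n (2*j) + rr d n (2*j+1) := rfl
    rw [heq]
    refine hadd.trans ?_
    filter_upwards [condexp_rr h2 hk, condexp_rr h2 hk1] with ω hc1 hc2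
    simp only [Pi.add_apply, hc1, hc2]
    norm_num
  have hint : Integrable (fun ω => rr d n (2*j) ω + rr d n (2*j+1) ω) P := hint1.add hint2
  have hle1 : ∀ ω, rr d n (2*j) ω + rr d n (2*j+1) ω ≤ 1 := by
    intro ω
    by_cases hp : Api d n (2*j) ω = 1 ∧ Api d n (pr (2*j)) ω = 0
    · have h1 : rr d n (2*j+1) ω = 0 := by
        refine ind_of_not ?_
        rintro ⟨ha, hb⟩
        have hpr : pr (2*j+1) = 2*j := by unfold pr; split <;> omega
        rw [hpr] at hb
        rw [hp.1] at hb
        norm_num at hb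
      rw [rr, h1, ind_of hp]; norm_num
    · rw [rr, ind_of_not hp, zero_add]; exact rr_le_one ω
  have hI : ∫ ω, (rr d n (2*j) ω + rr d n (2*j+1) ω) ∂P = 1 := by
    have hic := integral_condExp (μ := P) (hm := h2.hle n)
      (f := fun ω => rr d n (2*j) ω + rr d n (2*j+1) ω)
    rw [← hic, integral_congr_ae hce]
    simp
  have h0 : ∫ ω, (1 - (rr d n (2*j) ω + rr d n (2*j+1) ω)) ∂P = 0 := by
    rw [integral_sub (integrable_const 1) hint, hI]
    simp
  have hnn : (0:Ω → ℝ) ≤ fun ω => 1 - (rr d n (2*j) ω + rr d n (2*j+1) ω) := by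
    intro ω
    simp only [Pi.zero_apply]
    linarith [hle1 ω]
  have hz := (integral_eq_zero_iff_of_nonneg hnn ((integrable_const 1).sub hint)).1 h0
  filter_upwards [hz] with ω hω
  simp only [Pi.zero_apply] at hω
  linarith [hω]

lemma rr_add_pr_ae' (h2 : d.Assumption2 P) (n : ℕ) :
    ∀ᵐ ω ∂P, ∀ j, j < n → rr d n (2*j) ω + rr d n (2*j+1) ω = 1 := by
  rw [ae_all_iff]
  intro j
  by_cases hj : j < n
  · filter_upwards [rr_add_pr_ae h2 hj] with ω h _ using h
  · exact ae_of_all _ fun ω h => absurd h hj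

/-- A.s., the assignment at slot `k` equals the pattern indicator of slot `k`. -/
lemma rr_add_pr_eq {d : Data Ω kx kw} {n : ℕ} {ω : Ω}
    (hsum : ∀ j, j < n → rr d n (2*j) ω + rr d n (2*j+1) ω = 1) {k : ℕ} (hk : k < 2*n) :
    rr d n k ω + rr d n (pr k) ω = 1 := by
  obtain ⟨m, hm⟩ : ∃ m, k/2 = m := ⟨k/2, rfl⟩
  have hmn : m < n := by omega
  have hs := hsum m hmn
  rcases k_split k with h | h
  · rw [hm] at h
    have e2 : pr k = 2*m+1 := by unfold pr; split <;> omega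
    rw [e2, h]
    exact hs
  · rw [hm] at h
    have e2 : pr k = 2*m := by unfold pr; split <;> omega
    rw [e2, h]
    linarith

lemma Api_eq_rr (h2 : d.Assumption2 P) (n : ℕ) :
    ∀ᵐ ω ∂P, ∀ k, k < 2*n → Api d n k ω = rr d n k ω := by
  filter_upwards [rr_add_pr_ae' h2 n] with ω hω k hk
  have hpair := rr_add_pr_eq hω hk
  have hpr2 : pr (pr k) = k := by unfold pr; split <;> split <;> omega
  rcases ind_mem (p := Api d n k ω = 1 ∧ Api d n (pr k) ω = 0) with h0 | h1
  · -- rr k = 0, hence rr (pr k) = 1 and so Api k = 0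
    have h1' : rr d n (pr k) ω = 1 := by
      have : rr d n k ω = 0 := h0
      linarith
    have hprop := ind_eq_one_iff.1 h1'
    rw [hpr2] at hprop
    show Api d n k ω = rr d n k ω
    rw [show rr d n k ω = 0 from h0]
    exact hprop.2
  · have hprop := ind_eq_one_iff.1 h1
    show Api d n k ω = rr d n k ω
    rw [show rr d n k ω = 1 from h1]
    exact hprop.1

/-- A.s. representation of the treatment indicator of unit `i` via the pairing. -/
lemma ind_A_eq_sum (h2 : d.Assumption2 P) (a : Bool) (n : ℕ) :
    ∀ᵐ ω ∂P, ∀ i, i < 2*n →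
      ind (d.A n i ω = (if a then (1:ℝ) else 0))
        = ∑ k ∈ Finset.range (2*n), chi d n k i ω * rho d a n k ω := by
  filter_upwards [Api_eq_rr h2 n, rr_add_pr_ae' h2 n] with ω hG hsum i hi
  obtain ⟨k0, hk0m, hk0⟩ := (h2.πperm n ω).surjOn (Set.mem_Iio.2 hi)
  have hk0' : k0 < 2*n := Set.mem_Iio.1 hk0m
  rw [Finset.sum_eq_single_of_mem k0 (Finset.mem_range.2 hk0')]
  · rw [chi, ind_of hk0, one_mul]
    have hAi : d.A n i ω = rr d n k0 ω := by
      rw [← hk0]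
      exact hG k0 hk0'
    have hpair : rr d n k0 ω + rr d n (pr k0) ω = 1 := rr_add_pr_eq hsum hk0'
    rcases ind_mem (p := Api d n k0 ω = 1 ∧ Api d n (pr k0) ω = 0) with h0 | h1
    · -- rr k0 = 0 : unit i untreated
      have hA0 : d.A n i ω = 0 := by rw [hAi]; exact h0
      have hrpr : rr d n (pr k0) ω = 1 := by
        have : rr d n k0 ω = 0 := h0
        linarith
      cases a
      · rw [if_neg Bool.false_ne_true, rho_false, ind_of hA0, hrpr]
      · rw [if_pos rfl, rho_true, ind_of_not (by rw [hA0]; norm_num),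
          show rr d n k0 ω = 0 from h0]
    · -- rr k0 = 1 : unit i treated
      have hA1 : d.A n i ω = 1 := by rw [hAi, show rr d n k0 ω = 1 from h1]
      have hrpr : rr d n (pr k0) ω = 0 := by
        have : rr d n k0 ω = 1 := h1
        linarith
      cases a
      · rw [if_neg Bool.false_ne_true, rho_false, ind_of_not (by rw [hA1]; norm_num), hrpr]
      · rw [if_pos rfl, rho_true, ind_of hA1, show rr d n k0 ω = 1 from h1]
  · intro k hk hne
    rw [chi]
    have hn : ¬ (d.π n ω k = i) := by
      intro h
      exact hne ((h2.πperm n ω).injOn (Set.mem_Iio.2 (Finset.mem_range.1 hk)) hk0m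
        (h.trans hk0.symm))
    rw [ind_of_not hn, zero_mul]

lemma abs_rho_le_one (d : Data Ω kx kw) (a : Bool) (n k : ℕ) (ω : Ω) :
    |rho d a n k ω| ≤ 1 := by
  rw [abs_le]
  exact ⟨by linarith [rho_nonneg (d := d) (a := a) (n := n) (k := k) ω], rho_le_one ω⟩

lemma abs_mul_le_one' {x y : ℝ} (hx : |x| ≤ 1) (hy : |y| ≤ 1) : |x*y| ≤ 1 := by
  rw [abs_mul]
  calc |x| * |y| ≤ 1*1 := mul_le_mul hx hy (abs_nonneg _) zero_le_one
    _ = 1 := by norm_num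

lemma int_chi_rho (h2 : d.Assumption2 P) (a : Bool) {n k : ℕ} (hk : k < 2*n) (i : ℕ) :
    Integrable (fun ω => chi d n k i ω * rho d a n k ω) P := by
  refine integrable_of_bdd (C := 1)
    (((meas_chi h2 n k i).mul (meas_rho h2 a hk)).aestronglyMeasurable)
    (ae_of_all _ fun ω => ?_)
  exact abs_mul_le_one' abs_ind_le_one (abs_rho_le_one d a n k ω)

/-- Conditional expectation of the treatment indicator is `1/2`. -/
lemma condexp_indA (h2 : d.Assumption2 P) (a : Bool) {n i : ℕ} (hi : i < 2*n) :
    P[fun ω => ind (d.A n i ω = (if a then (1:ℝ) else 0))|d.mXn n]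
      =ᵐ[P] fun _ => (1/2 : ℝ) := by
  have hrep : (fun ω => ind (d.A n i ω = (if a then (1:ℝ) else 0)))
      =ᵐ[P] (fun ω => ∑ k ∈ Finset.range (2*n), chi d n k i ω * rho d a n k ω) := by
    filter_upwards [ind_A_eq_sum h2 a n] with ω h using h i hi
  refine (condExp_congr_ae hrep).trans ?_
  have hfun : (fun ω => ∑ k ∈ Finset.range (2*n), chi d n k i ω * rho d a n k ω)
      = ∑ k ∈ Finset.range (2*n), (fun ω => chi d n k i ω * rho d a n k ω) := by
    funext ω; rw [Finset.sum_apply]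
  rw [hfun]
  have hint : ∀ k ∈ Finset.range (2*n),
      Integrable (fun ω => chi d n k i ω * rho d a n k ω) P :=
    fun k hk => int_chi_rho h2 a (Finset.mem_range.1 hk) i
  refine (condExp_finsetSum hint (d.mXn n)).trans ?_
  have hterm : ∀ k ∈ Finset.range (2*n),
      P[fun ω => chi d n k i ω * rho d a n k ω|d.mXn n]
        =ᵐ[P] fun ω => chi d n k i ω * (1/2 : ℝ) := by
    intro k hk
    have hkn := Finset.mem_range.1 hk
    have hmul := condExp_mul_of_stronglyMeasurable_left (μ := P)
      ((meas_chi_m h2 n k i).stronglyMeasurable)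
      (by
        have : chi d n k i * rho d a n k = fun ω => chi d n k i ω * rho d a n k ω := rfl
        rw [this]
        exact int_chi_rho h2 a hkn i)
      (int_rho h2 a hkn)
    have heq : (fun ω => chi d n k i ω * rho d a n k ω) = chi d n k i * rho d a n k := rfl
    rw [heq]
    refine hmul.trans ?_
    filter_upwards [condexp_rho h2 a hkn] with ω hc
    simp only [Pi.mul_apply, hc]
  have hsum : (fun ω => ∑ k ∈ Finset.range (2*n),
      (P[fun ω' => chi d n k i ω' * rho d a n k ω'|d.mXn n]) ω)
      =ᵐ[P] (fun ω => ∑ k ∈ Finset.range (2*n), chi d n k i ω * (1/2 : ℝ)) :=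
    ae_sum_congr _ hterm
  have hL : (∑ k ∈ Finset.range (2*n), P[fun ω => chi d n k i ω * rho d a n k ω|d.mXn n])
      = fun ω => ∑ k ∈ Finset.range (2*n),
        (P[fun ω' => chi d n k i ω' * rho d a n k ω'|d.mXn n]) ω := by
    funext ω; rw [Finset.sum_apply]
  rw [hL]
  refine hsum.trans (ae_of_all _ fun ω => ?_)
  show ∑ k ∈ Finset.range (2*n), chi d n k i ω * (1/2:ℝ) = 1/2
  rw [← Finset.sum_mul, sum_chi h2 hi ω, one_mul]

/-- Conditional expectation of products of treatment indicators is at most `1/4`. -/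
lemma condexp_indA_mul (h2 : d.Assumption2 P) (a : Bool) {n i j : ℕ} (hi : i < 2*n)
    (hj : j < 2*n) (hij : i ≠ j) :
    P[fun ω => ind (d.A n i ω = (if a then (1:ℝ) else 0))
      * ind (d.A n j ω = (if a then (1:ℝ) else 0))|d.mXn n]
      ≤ᵐ[P] fun _ => (1/4 : ℝ) := by
  set s2 := (Finset.range (2*n)) ×ˢ (Finset.range (2*n)) with hs2
  set F : ℕ × ℕ → Ω → ℝ := fun p ω =>
    (chi d n p.1 i ω * chi d n p.2 j ω) * (rho d a n p.1 ω * rho d a n p.2 ω) with hF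
  have hrep : (fun ω => ind (d.A n i ω = (if a then (1:ℝ) else 0))
      * ind (d.A n j ω = (if a then (1:ℝ) else 0)))
      =ᵐ[P] (fun ω => ∑ p ∈ s2, F p ω) := by
    filter_upwards [ind_A_eq_sum h2 a n] with ω h
    rw [h i hi, h j hj, Finset.sum_mul_sum]
    rw [hs2, Finset.sum_product]
    refine Finset.sum_congr rfl fun k _ => Finset.sum_congr rfl fun k' _ => ?_
    simp only [hF]
    ring
  have habs : ∀ (x y : ℝ), |x| ≤ 1 → |y| ≤ 1 → |x*y| ≤ 1 := fun x y hx hy => abs_mul_le_one' hx hy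
  have habs_rho : ∀ (k : ℕ) (ω : Ω), |rho d a n k ω| ≤ 1 := fun k ω => abs_rho_le_one d a n k ω
  have hFint : ∀ p ∈ s2, Integrable (F p) P := by
    intro p hp
    rw [hs2, Finset.mem_product] at hp
    have hp1 := Finset.mem_range.1 hp.1
    have hp2 := Finset.mem_range.1 hp.2
    refine integrable_of_bdd (C := 1) ((((meas_chi h2 n p.1 i).mul (meas_chi h2 n p.2 j)).mul
        ((meas_rho h2 a hp1).mul (meas_rho h2 a hp2)))).aestronglyMeasurable
      (ae_of_all _ fun ω => ?_)
    exact habs _ _ (habs _ _ abs_ind_le_one abs_ind_le_one)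
        (habs _ _ (habs_rho _ _) (habs_rho _ _))
  have hterm : ∀ p ∈ s2, P[F p|d.mXn n]
      ≤ᵐ[P] fun ω => (chi d n p.1 i ω * chi d n p.2 j ω) * (1/4 : ℝ) := by
    intro p hp
    rw [hs2, Finset.mem_product] at hp
    have hp1 := Finset.mem_range.1 hp.1
    have hp2 := Finset.mem_range.1 hp.2
    by_cases hpp : p.1/2 = p.2/2
    · -- the term vanishes identically
      have hF0 : F p = (fun _ => (0:ℝ)) := by
        funext ω
        simp only [hF]
        by_cases hpe : p.1 = p.2
        · have hcc : chi d n p.1 i ω * chi d n p.2 j ω = 0 := by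
            rw [← hpe, chi, chi, ind_mul_ind]
            refine ind_of_not ?_
            rintro ⟨ha, hb⟩
            exact hij (ha.symm.trans hb)
          rw [hcc, zero_mul]
        · rw [rho_mul_same d a n hpp hpe ω, mul_zero]
      rw [hF0]
      have h0 : P[(fun _ => (0:ℝ))|d.mXn n] =ᵐ[P] fun _ => (0:ℝ) := by
        have : (fun _ => (0:ℝ)) = (0 : Ω → ℝ) := rfl
        rw [this, condExp_zero]
      refine h0.le.trans (ae_of_all _ fun ω => ?_)
      have h1 : 0 ≤ chi d n p.1 i ω * chi d n p.2 j ω :=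
        mul_nonneg ind_nonneg' ind_nonneg'
      positivity
    · -- distinct pairs : pull out and use the exact value 1/4
      have hmul := condExp_mul_of_stronglyMeasurable_left (μ := P)
        (g := fun ω => rho d a n p.1 ω * rho d a n p.2 ω)
        (((meas_chi_m h2 n p.1 i).mul (meas_chi_m h2 n p.2 j)).stronglyMeasurable)
        (by
          have : (fun ω => chi d n p.1 i ω * chi d n p.2 j ω)
              * (fun ω => rho d a n p.1 ω * rho d a n p.2 ω) = F p := rfl
          show Integrable (F p) P
          exact hFint p (by rw [hs2, Finset.mem_product]; exact hp)
          )
        (by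
          refine integrable_of_bdd (C := 1) (((meas_rho h2 a hp1).mul
            (meas_rho h2 a hp2)).aestronglyMeasurable) (ae_of_all _ fun ω => ?_)
          exact habs _ _ (habs_rho _ _) (habs_rho _ _))
      have heqF : F p = (fun ω => chi d n p.1 i ω * chi d n p.2 j ω)
          * (fun ω => rho d a n p.1 ω * rho d a n p.2 ω) := rfl
      rw [heqF]
      refine (hmul.trans ?_).le
      filter_upwards [condexp_rho_mul h2 a hp1 hp2 hpp] with ω hc
      simp only [Pi.mul_apply, hc]
  have hfun : (fun ω => ∑ p ∈ s2, F p ω) = ∑ p ∈ s2, F p := by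
    funext ω; rw [Finset.sum_apply]
  have hcesum : P[fun ω => ∑ p ∈ s2, F p ω|d.mXn n] =ᵐ[P] fun ω => ∑ p ∈ s2, (P[F p|d.mXn n]) ω := by
    rw [hfun]
    refine (condExp_finsetSum hFint (d.mXn n)).trans ?_
    refine ae_of_all _ fun ω => ?_
    rw [Finset.sum_apply]
  refine ((condExp_congr_ae hrep).trans hcesum).trans_le ?_
  have hle1 := ae_sum_le s2 hterm
  refine hle1.trans (ae_of_all _ fun ω => ?_)
  show ∑ p ∈ s2, (chi d n p.1 i ω * chi d n p.2 j ω) * (1/4:ℝ) ≤ 1/4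
  rw [← Finset.sum_mul]
  have hcc : ∑ p ∈ s2, chi d n p.1 i ω * chi d n p.2 j ω
      = (∑ k ∈ Finset.range (2*n), chi d n k i ω)
        * (∑ k ∈ Finset.range (2*n), chi d n k j ω) := by
    rw [Finset.sum_mul_sum, hs2, Finset.sum_product]
  rw [hcc, sum_chi h2 hi ω, sum_chi h2 hj ω]
  norm_num

end WithAssumptions

/-! ### Projections of the unit-level tuples -/

/-- Projection onto `D(a)` from the `(Y₁,Y₀,D₁,D₀,W)` tuple. -/
def pD (kw : ℕ) (a : Bool) : ℝ×ℝ×ℝ×ℝ×(Ex kw) → ℝ :=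
  fun q => if a then q.2.2.1 else q.2.2.2.1

/-- Projection onto `D(a)` from the full tuple. -/
def qD (kx kw : ℕ) (a : Bool) : ℝ×ℝ×ℝ×ℝ×(Ex kx)×(Ex kw) → ℝ :=
  fun q => if a then q.2.2.1 else q.2.2.2.1

lemma meas_pD (kw : ℕ) (a : Bool) : Measurable (pD kw a) := by
  cases a
  · exact (measurable_fst.comp (measurable_snd.comp (measurable_snd.comp measurable_snd)))
  · exact (measurable_fst.comp (measurable_snd.comp measurable_snd))

lemma meas_qD (kx kw : ℕ) (a : Bool) : Measurable (qD kx kw a) := by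
  cases a
  · exact (measurable_fst.comp (measurable_snd.comp (measurable_snd.comp measurable_snd)))
  · exact (measurable_fst.comp (measurable_snd.comp measurable_snd))

lemma qD_tuple (d : Data Ω kx kw) (a : Bool) (i : ℕ) :
    qD kx kw a ∘ d.tuple i = d.Dpo a i := by
  cases a <;> rfl

section DSide

variable [StandardBorelSpace Ω] {d : Data Ω kx kw} {P : Measure Ω} [IsProbabilityMeasure P]

lemma meas_Dpo (hiid : d.IID P) (a : Bool) (i : ℕ) : Measurable (d.Dpo a i) := by
  have h := (meas_qD kx kw a).comp (hiid.meas i)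
  rwa [qD_tuple] at h

lemma identDistrib_Dpo (hiid : d.IID P) (a : Bool) (i : ℕ) :
    IdentDistrib (d.Dpo a i) (d.Dpo a 0) P P := by
  have h := (hiid.ident i).comp (meas_qD kx kw a)
  rwa [qD_tuple, qD_tuple] at h

lemma bin_Dpo (hiid : d.IID P) (a : Bool) (i : ℕ) :
    ∀ᵐ ω ∂P, d.Dpo a i ω = 0 ∨ d.Dpo a i ω = 1 := by
  have h0 : ∀ᵐ ω ∂P, d.Dpo a 0 ω = 0 ∨ d.Dpo a 0 ω = 1 := by
    cases a
    · exact hiid.bin0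
    · exact hiid.bin1
  have hset : MeasurableSet {x : ℝ | x = 0 ∨ x = 1} := by
    have he : {x : ℝ | x = 0 ∨ x = 1} = {0} ∪ {1} := by
      ext x; simp [Set.mem_union, or_comm]
    rw [he]
    exact (measurableSet_singleton 0).union (measurableSet_singleton 1)
  have hpre : ∀ (f : Ω → ℝ), {ω | ¬(f ω = 0 ∨ f ω = 1)} = f ⁻¹' ({x : ℝ | x = 0 ∨ x = 1})ᶜ := by
    intro f; ext ω; simp
  rw [ae_iff] at h0 ⊢
  rw [hpre] at h0 ⊢
  rw [(identDistrib_Dpo hiid a i).measure_mem_eq hset.compl]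
  exact h0

lemma int_Dpo (hiid : d.IID P) (a : Bool) (i : ℕ) : Integrable (d.Dpo a i) P := by
  refine integrable_of_bdd (C := 1) (meas_Dpo hiid a i).aestronglyMeasurable ?_
  filter_upwards [bin_Dpo hiid a i] with ω h
  rcases h with h | h <;> rw [h] <;> norm_num

lemma integral_Dpo_eq (hiid : d.IID P) (a : Bool) (i : ℕ) :
    ∫ ω, d.Dpo a i ω ∂P = ∫ ω, d.Dpo a 0 ω ∂P :=
  (identDistrib_Dpo hiid a i).integral_eq

lemma Dpo_mean_nonneg (hiid : d.IID P) (a : Bool) : 0 ≤ ∫ ω, d.Dpo a 0 ω ∂P := by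
  refine integral_nonneg_of_ae ?_
  filter_upwards [bin_Dpo hiid a 0] with ω h
  rcases h with h | h <;> rw [h] <;> norm_num

lemma Dpo_mean_le_one (hiid : d.IID P) (a : Bool) : ∫ ω, d.Dpo a 0 ω ∂P ≤ 1 := by
  have h := integral_mono_ae (int_Dpo hiid a 0) (integrable_const 1) ?_
  · simpa using h
  · filter_upwards [bin_Dpo hiid a 0] with ω h
    rcases h with h | h <;> rw [h] <;> norm_num

lemma integral_Dpo_mul (hiid : d.IID P) (a : Bool) {i j : ℕ} (hij : i ≠ j) :
    ∫ ω, d.Dpo a i ω * d.Dpo a j ω ∂P = (∫ ω, d.Dpo a 0 ω ∂P) ^ 2 := by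
  have hind : IndepFun (d.Dpo a i) (d.Dpo a j) P := by
    have h := (hiid.indep.indepFun hij).comp (meas_qD kx kw a) (meas_qD kx kw a)
    rwa [qD_tuple, qD_tuple] at h
  calc ∫ ω, d.Dpo a i ω * d.Dpo a j ω ∂P = integral P (d.Dpo a i * d.Dpo a j) := rfl
    _ = (∫ ω, d.Dpo a i ω ∂P) * ∫ ω, d.Dpo a j ω ∂P :=
        hind.integral_mul_eq_mul_integral (int_Dpo hiid a i).aestronglyMeasurable (int_Dpo hiid a j).aestronglyMeasurable
    _ = (∫ ω, d.Dpo a 0 ω ∂P) ^ 2 := by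
        rw [integral_Dpo_eq hiid a i, integral_Dpo_eq hiid a j]; ring

lemma meas_D1' (hiid : d.IID P) (i : ℕ) : Measurable (d.D1 i) := meas_Dpo hiid true i

lemma meas_D0' (hiid : d.IID P) (i : ℕ) : Measurable (d.D0 i) := meas_Dpo hiid false i

lemma meas_Y1' (hiid : d.IID P) (i : ℕ) : Measurable (d.Y1 i) :=
  measurable_fst.comp (hiid.meas i)

lemma meas_Y0' (hiid : d.IID P) (i : ℕ) : Measurable (d.Y0 i) :=
  (measurable_fst.comp measurable_snd).comp (hiid.meas i)

lemma meas_W' (hiid : d.IID P) (i : ℕ) : Measurable (d.W i) :=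
  (measurable_snd.comp (measurable_snd.comp (measurable_snd.comp
    (measurable_snd.comp measurable_snd)))).comp (hiid.meas i)

lemma meas_Dobs (hiid : d.IID P) (h2 : d.Assumption2 P) (n i : ℕ) :
    Measurable (d.Dobs n i) := by
  show Measurable fun ω => d.D1 i ω * d.A n i ω + d.D0 i ω * (1 - d.A n i ω)
  exact ((meas_D1' hiid i).mul (h2.Ameas n i)).add
    ((meas_D0' hiid i).mul (measurable_const.sub (h2.Ameas n i)))

lemma mul01 {x y : ℝ} (hx : x = 0 ∨ x = 1) (hy : y = 0 ∨ y = 1) : x*y = 0 ∨ x*y = 1 := by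
  rcases hx with h | h <;> rcases hy with h' | h' <;> rw [h, h'] <;> norm_num

lemma bin_Dobs (hiid : d.IID P) (h2 : d.Assumption2 P) {n i : ℕ} (hi : i < 2*n) :
    ∀ᵐ ω ∂P, d.Dobs n i ω = 0 ∨ d.Dobs n i ω = 1 := by
  filter_upwards [bin_Dpo hiid true i, bin_Dpo hiid false i, h2.Abin n i hi] with ω h1 h0 hA
  rcases hA with hA | hA
  · have he : d.Dobs n i ω = d.D0 i ω := by
      show d.D1 i ω * d.A n i ω + d.D0 i ω * (1 - d.A n i ω) = d.D0 i ω
      rw [hA]; ring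
    rw [he]; exact h0
  · have he : d.Dobs n i ω = d.D1 i ω := by
      show d.D1 i ω * d.A n i ω + d.D0 i ω * (1 - d.A n i ω) = d.D1 i ω
      rw [hA]; ring
    rw [he]; exact h1

/-- `E[1{A_i = a} D_i] = E[D(a)]/2`. -/
lemma integral_T (hiid : d.IID P) (h2 : d.Assumption2 P) (a : Bool) {n i : ℕ} (hi : i < 2*n) :
    ∫ ω, ind (d.A n i ω = (if a then (1:ℝ) else 0)) * d.Dobs n i ω ∂P
      = (∫ ω, d.Dpo a 0 ω ∂P) / 2 := by
  have hGmeas : Measurable (fun ω (l : Fin (2*n)) =>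
      (d.Y1 (l:ℕ) ω, d.Y0 (l:ℕ) ω, d.D1 (l:ℕ) ω, d.D0 (l:ℕ) ω, d.W (l:ℕ) ω)) :=
    measurable_pi_lambda _ fun l => ((meas_Y1' hiid l).prodMk <| (meas_Y0' hiid l).prodMk <|
      (meas_D1' hiid l).prodMk <| (meas_D0' hiid l).prodMk (meas_W' hiid l))
  have hFmeas : Measurable (fun ω (l : Fin (2*n)) => d.A n (l:ℕ) ω) :=
    measurable_pi_lambda _ fun l => h2.Ameas n (l:ℕ)
  have hI : (⟨i, hi⟩ : Fin (2*n)) = (⟨i, hi⟩ : Fin (2*n)) := rfl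
  set I : Fin (2*n) := ⟨i, hi⟩ with hIdef
  have hsDm : MeasurableSet {w : Fin (2*n) → ℝ×ℝ×ℝ×ℝ×(Ex kw) | pD kw a (w I) = 1} :=
    measurableSet_eq_c ((meas_pD kw a).comp (measurable_pi_apply I)) 1
  have hsAm : MeasurableSet {v : Fin (2*n) → ℝ | v I = (if a then (1:ℝ) else 0)} :=
    measurableSet_eq_c (measurable_pi_apply I) _
  have hprod := (condIndepFun_iff_condExp_inter_preimage_eq_mul
    (m' := d.mXn n) (hm' := h2.hle n) (μ := P) hGmeas hFmeas).1 (h2.condIndep n)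
    _ _ hsDm hsAm
  set GS : Set Ω := (fun ω (l : Fin (2*n)) =>
      (d.Y1 (l:ℕ) ω, d.Y0 (l:ℕ) ω, d.D1 (l:ℕ) ω, d.D0 (l:ℕ) ω, d.W (l:ℕ) ω))
      ⁻¹' {w | pD kw a (w I) = 1} with hGS
  set FS : Set Ω := (fun ω (l : Fin (2*n)) => d.A n (l:ℕ) ω)
      ⁻¹' {v | v I = (if a then (1:ℝ) else 0)} with hFS
  have hGSm : MeasurableSet GS := hGmeas hsDm
  have hFSm : MeasurableSet FS := hFmeas hsAm
  -- identification of the indicator functions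
  have hFind : (FS.indicator (fun _ => (1:ℝ)))
      = fun ω => ind (d.A n i ω = (if a then (1:ℝ) else 0)) := by
    funext ω
    rw [indicator_eq_ind]
    exact ind_congr Iff.rfl
  have hGind : (GS.indicator (fun _ => (1:ℝ))) = fun ω => ind (d.Dpo a i ω = 1) := by
    funext ω
    rw [indicator_eq_ind]
    refine ind_congr ?_
    cases a <;> exact Iff.rfl
  -- the integrand is a.e. the indicator of `GS ∩ FS`
  have hT : (fun ω => ind (d.A n i ω = (if a then (1:ℝ) else 0)) * d.Dobs n i ω)
      =ᵐ[P] (GS ∩ FS).indicator (fun _ => (1:ℝ)) := by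
    filter_upwards [bin_Dpo hiid true i, bin_Dpo hiid false i] with ω hb1 hb0
    rw [indicator_eq_ind]
    have hmem : (ω ∈ GS ∩ FS) ↔ (d.Dpo a i ω = 1
        ∧ d.A n i ω = (if a then (1:ℝ) else 0)) := by
      constructor
      · rintro ⟨hg, hf⟩
        refine ⟨?_, hf⟩
        cases a <;> exact hg
      · rintro ⟨hg, hf⟩
        refine ⟨?_, hf⟩
        cases a <;> exact hg
    rw [ind_congr hmem]
    by_cases hA : d.A n i ω = (if a then (1:ℝ) else 0)
    · rw [ind_of hA, one_mul]
      have hDobs : d.Dobs n i ω = d.Dpo a i ω := by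
        cases a
        · show d.D1 i ω * d.A n i ω + d.D0 i ω * (1 - d.A n i ω) = d.D0 i ω
          rw [show d.A n i ω = 0 from hA]; ring
        · show d.D1 i ω * d.A n i ω + d.D0 i ω * (1 - d.A n i ω) = d.D1 i ω
          rw [show d.A n i ω = 1 from hA]; ring
      rw [hDobs]
      have hb : d.Dpo a i ω = 0 ∨ d.Dpo a i ω = 1 := by cases a <;> [exact hb0; exact hb1]
      rcases hb with h | h
      · rw [h, ind_of_not (fun hc => absurd hc.1 (by norm_num))]
      · rw [h, ind_of ⟨rfl, hA⟩]
    · rw [ind_of_not hA, zero_mul, ind_of_not (fun hc => hA hc.2)]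
  have hIntInd : Integrable ((GS ∩ FS).indicator (fun _ => (1:ℝ))) P := by
    refine integrable_of_bdd (C := 1)
      ((measurable_const.indicator (hGSm.inter hFSm)).aestronglyMeasurable)
      (ae_of_all _ fun ω => ?_)
    rw [indicator_eq_ind]
    exact abs_ind_le_one
  calc ∫ ω, ind (d.A n i ω = (if a then (1:ℝ) else 0)) * d.Dobs n i ω ∂P
      = ∫ ω, (GS ∩ FS).indicator (fun _ => (1:ℝ)) ω ∂P := integral_congr_ae hT
    _ = ∫ ω, (P[(GS ∩ FS).indicator (fun _ => (1:ℝ))|d.mXn n]) ω ∂P :=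
        (integral_condExp (h2.hle n)).symm
    _ = ∫ ω, (P[GS.indicator (fun _ => (1:ℝ))|d.mXn n]) ω * (1/2 : ℝ) ∂P := by
        refine integral_congr_ae ?_
        refine hprod.trans ?_
        rw [hFind]
        filter_upwards [condexp_indA h2 a hi] with ω hc
        rw [hc]
    _ = (∫ ω, (P[GS.indicator (fun _ => (1:ℝ))|d.mXn n]) ω ∂P) * (1/2 : ℝ) :=
        integral_mul_const _ _
    _ = (∫ ω, GS.indicator (fun _ => (1:ℝ)) ω ∂P) * (1/2 : ℝ) := by
        rw [integral_condExp (h2.hle n)]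
    _ = (∫ ω, d.Dpo a i ω ∂P) * (1/2 : ℝ) := by
        congr 1
        rw [hGind]
        refine integral_congr_ae ?_
        filter_upwards [bin_Dpo hiid a i] with ω hb
        rcases hb with h | h
        · rw [h, ind_of_not (by norm_num)]
        · rw [h, ind_of rfl]
    _ = (∫ ω, d.Dpo a 0 ω ∂P) / 2 := by
        rw [integral_Dpo_eq hiid a i]; ring

/-- `E[1{A_i = a} D_i 1{A_j = a} D_j] ≤ E[D(a)]²/4` for `i ≠ j`. -/
lemma integral_TT_le (hiid : d.IID P) (h2 : d.Assumption2 P) (a : Bool) {n i j : ℕ}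
    (hi : i < 2*n) (hj : j < 2*n) (hij : i ≠ j) :
    ∫ ω, (ind (d.A n i ω = (if a then (1:ℝ) else 0)) * d.Dobs n i ω)
      * (ind (d.A n j ω = (if a then (1:ℝ) else 0)) * d.Dobs n j ω) ∂P
      ≤ (∫ ω, d.Dpo a 0 ω ∂P) ^ 2 / 4 := by
  have hGmeas : Measurable (fun ω (l : Fin (2*n)) =>
      (d.Y1 (l:ℕ) ω, d.Y0 (l:ℕ) ω, d.D1 (l:ℕ) ω, d.D0 (l:ℕ) ω, d.W (l:ℕ) ω)) :=
    measurable_pi_lambda _ fun l => ((meas_Y1' hiid l).prodMk <| (meas_Y0' hiid l).prodMk <|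
      (meas_D1' hiid l).prodMk <| (meas_D0' hiid l).prodMk (meas_W' hiid l))
  have hFmeas : Measurable (fun ω (l : Fin (2*n)) => d.A n (l:ℕ) ω) :=
    measurable_pi_lambda _ fun l => h2.Ameas n (l:ℕ)
  set I : Fin (2*n) := ⟨i, hi⟩ with hIdef
  set J : Fin (2*n) := ⟨j, hj⟩ with hJdef
  have hsDm : MeasurableSet {w : Fin (2*n) → ℝ×ℝ×ℝ×ℝ×(Ex kw) |
      pD kw a (w I) = 1 ∧ pD kw a (w J) = 1} :=
    (measurableSet_eq_c ((meas_pD kw a).comp (measurable_pi_apply I)) 1).inter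
      (measurableSet_eq_c ((meas_pD kw a).comp (measurable_pi_apply J)) 1)
  have hsAm : MeasurableSet {v : Fin (2*n) → ℝ |
      v I = (if a then (1:ℝ) else 0) ∧ v J = (if a then (1:ℝ) else 0)} :=
    (measurableSet_eq_c (measurable_pi_apply I) _).inter
      (measurableSet_eq_c (measurable_pi_apply J) _)
  have hprod := (condIndepFun_iff_condExp_inter_preimage_eq_mul
    (m' := d.mXn n) (hm' := h2.hle n) (μ := P) hGmeas hFmeas).1 (h2.condIndep n)
    _ _ hsDm hsAm
  set GS : Set Ω := (fun ω (l : Fin (2*n)) =>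
      (d.Y1 (l:ℕ) ω, d.Y0 (l:ℕ) ω, d.D1 (l:ℕ) ω, d.D0 (l:ℕ) ω, d.W (l:ℕ) ω))
      ⁻¹' {w | pD kw a (w I) = 1 ∧ pD kw a (w J) = 1} with hGS
  set FS : Set Ω := (fun ω (l : Fin (2*n)) => d.A n (l:ℕ) ω)
      ⁻¹' {v | v I = (if a then (1:ℝ) else 0) ∧ v J = (if a then (1:ℝ) else 0)} with hFS
  have hGSm : MeasurableSet GS := hGmeas hsDm
  have hFSm : MeasurableSet FS := hFmeas hsAm
  have hFind : (FS.indicator (fun _ => (1:ℝ)))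
      = fun ω => ind (d.A n i ω = (if a then (1:ℝ) else 0))
        * ind (d.A n j ω = (if a then (1:ℝ) else 0)) := by
    funext ω
    rw [indicator_eq_ind, ind_mul_ind]
    exact ind_congr Iff.rfl
  have hGind : (GS.indicator (fun _ => (1:ℝ)))
      = fun ω => ind (d.Dpo a i ω = 1 ∧ d.Dpo a j ω = 1) := by
    funext ω
    rw [indicator_eq_ind]
    refine ind_congr ?_
    cases a <;> exact Iff.rfl
  -- the integrand is a.e. the indicator of `GS ∩ FS`
  have hT : (fun ω => (ind (d.A n i ω = (if a then (1:ℝ) else 0)) * d.Dobs n i ω)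
      * (ind (d.A n j ω = (if a then (1:ℝ) else 0)) * d.Dobs n j ω))
      =ᵐ[P] (GS ∩ FS).indicator (fun _ => (1:ℝ)) := by
    filter_upwards [bin_Dpo hiid true i, bin_Dpo hiid false i, bin_Dpo hiid true j,
      bin_Dpo hiid false j] with ω hb1i hb0i hb1j hb0j
    rw [indicator_eq_ind]
    have hmem : (ω ∈ GS ∩ FS) ↔ ((d.Dpo a i ω = 1 ∧ d.Dpo a j ω = 1)
        ∧ (d.A n i ω = (if a then (1:ℝ) else 0)
          ∧ d.A n j ω = (if a then (1:ℝ) else 0))) := by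
      constructor
      · rintro ⟨hg, hf⟩
        refine ⟨?_, hf⟩
        cases a <;> exact hg
      · rintro ⟨hg, hf⟩
        refine ⟨?_, hf⟩
        cases a <;> exact hg
    rw [ind_congr hmem]
    by_cases hAi : d.A n i ω = (if a then (1:ℝ) else 0)
    · by_cases hAj : d.A n j ω = (if a then (1:ℝ) else 0)
      · rw [ind_of hAi, ind_of hAj, one_mul, one_mul]
        have hDi : d.Dobs n i ω = d.Dpo a i ω := by
          cases a
          · show d.D1 i ω * d.A n i ω + d.D0 i ω * (1 - d.A n i ω) = d.D0 i ω
            rw [show d.A n i ω = 0 from hAi]; ring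
          · show d.D1 i ω * d.A n i ω + d.D0 i ω * (1 - d.A n i ω) = d.D1 i ω
            rw [show d.A n i ω = 1 from hAi]; ring
        have hDj : d.Dobs n j ω = d.Dpo a j ω := by
          cases a
          · show d.D1 j ω * d.A n j ω + d.D0 j ω * (1 - d.A n j ω) = d.D0 j ω
            rw [show d.A n j ω = 0 from hAj]; ring
          · show d.D1 j ω * d.A n j ω + d.D0 j ω * (1 - d.A n j ω) = d.D1 j ω
            rw [show d.A n j ω = 1 from hAj]; ring
        rw [hDi, hDj]
        have hbi : d.Dpo a i ω = 0 ∨ d.Dpo a i ω = 1 := by cases a <;> [exact hb0i; exact hb1i]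
        have hbj : d.Dpo a j ω = 0 ∨ d.Dpo a j ω = 1 := by cases a <;> [exact hb0j; exact hb1j]
        rcases hbi with h | h
        · rw [h, zero_mul, ind_of_not (fun hc => absurd hc.1.1 (by norm_num))]
        · rcases hbj with h' | h'
          · rw [h, h', mul_zero, ind_of_not (fun hc => absurd hc.1.2 (by norm_num))]
          · rw [h, h', one_mul, ind_of ⟨⟨rfl, rfl⟩, hAi, hAj⟩]
      · rw [ind_of_not hAj, zero_mul, mul_zero, ind_of_not (fun hc => hAj hc.2.2)]
    · rw [ind_of_not hAi, zero_mul, zero_mul, ind_of_not (fun hc => hAi hc.2.1)]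
  -- the conditional-expectation product bound
  have hFcond : P[FS.indicator (fun _ => (1:ℝ))|d.mXn n] ≤ᵐ[P] fun _ => (1/4 : ℝ) := by
    rw [hFind]
    exact condexp_indA_mul h2 a hi hj hij
  have hGnn : (0:Ω → ℝ) ≤ᵐ[P] P[GS.indicator (fun _ => (1:ℝ))|d.mXn n] := by
    refine condExp_nonneg ?_
    refine ae_of_all _ fun ω => ?_
    rw [indicator_eq_ind]
    exact ind_nonneg'
  calc ∫ ω, (ind (d.A n i ω = (if a then (1:ℝ) else 0)) * d.Dobs n i ω)
      * (ind (d.A n j ω = (if a then (1:ℝ) else 0)) * d.Dobs n j ω) ∂P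
      = ∫ ω, (GS ∩ FS).indicator (fun _ => (1:ℝ)) ω ∂P := integral_congr_ae hT
    _ = ∫ ω, (P[(GS ∩ FS).indicator (fun _ => (1:ℝ))|d.mXn n]) ω ∂P :=
        (integral_condExp (h2.hle n)).symm
    _ ≤ ∫ ω, (P[GS.indicator (fun _ => (1:ℝ))|d.mXn n]) ω * (1/4 : ℝ) ∂P := by
        refine integral_mono_ae ?_ ?_ ?_
        · exact integrable_condExp
        · exact integrable_condExp.mul_const _
        · refine (hprod.le.trans ?_)
          filter_upwards [hFcond, hGnn] with ω hle hnn
          exact mul_le_mul_of_nonneg_left hle hnn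
    _ = (∫ ω, (P[GS.indicator (fun _ => (1:ℝ))|d.mXn n]) ω ∂P) * (1/4 : ℝ) :=
        integral_mul_const _ _
    _ = (∫ ω, GS.indicator (fun _ => (1:ℝ)) ω ∂P) * (1/4 : ℝ) := by
        rw [integral_condExp (h2.hle n)]
    _ = (∫ ω, d.Dpo a i ω * d.Dpo a j ω ∂P) * (1/4 : ℝ) := by
        congr 1
        rw [hGind]
        refine integral_congr_ae ?_
        filter_upwards [bin_Dpo hiid a i, bin_Dpo hiid a j] with ω hbi hbj
        rw [← ind_mul_ind]
        have e1 : ind (d.Dpo a i ω = 1) = d.Dpo a i ω := by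
          rcases hbi with h | h
          · rw [h, ind_of_not (by norm_num)]
          · rw [h, ind_of rfl]
        have e2 : ind (d.Dpo a j ω = 1) = d.Dpo a j ω := by
          rcases hbj with h | h
          · rw [h, ind_of_not (by norm_num)]
          · rw [h, ind_of rfl]
        rw [e1, e2]
    _ ≤ (∫ ω, d.Dpo a 0 ω ∂P) ^ 2 / 4 := by
        rw [integral_Dpo_mul hiid a hij]; ring_nf; rfl

/-- The summands are a.e. `{0,1}`-valued, so squares integrate like levels. -/
lemma T_sq_ae (hiid : d.IID P) (h2 : d.Assumption2 P) (a : Bool) {n i : ℕ} (hi : i < 2*n) :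
    (fun ω => (ind (d.A n i ω = (if a then (1:ℝ) else 0)) * d.Dobs n i ω)
      * (ind (d.A n i ω = (if a then (1:ℝ) else 0)) * d.Dobs n i ω))
      =ᵐ[P] fun ω => ind (d.A n i ω = (if a then (1:ℝ) else 0)) * d.Dobs n i ω := by
  filter_upwards [bin_Dobs hiid h2 hi] with ω hb
  have h01 : ind (d.A n i ω = (if a then (1:ℝ) else 0)) * d.Dobs n i ω = 0
      ∨ ind (d.A n i ω = (if a then (1:ℝ) else 0)) * d.Dobs n i ω = 1 :=
    mul01 ind_mem hb
  rcases h01 with h | h <;> rw [h] <;> norm_num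

lemma meas_phiHat (hiid : d.IID P) (h2 : d.Assumption2 P) (n : ℕ) (x : ℝ) :
    Measurable (d.phiHat n x) := by
  show Measurable fun ω => (n:ℝ)⁻¹ * ∑ i ∈ Finset.range (2*n), ind (d.A n i ω = x) * d.Dobs n i ω
  refine measurable_const.mul (Finset.measurable_sum _ fun i _ => ?_)
  exact (measurable_ind (measurableSet_eq_c (h2.Ameas n i) x)).mul (meas_Dobs hiid h2 n i)

lemma abs_T_ae (hiid : d.IID P) (h2 : d.Assumption2 P) (a : Bool) (n : ℕ) :
    ∀ᵐ ω ∂P, ∀ i ∈ Finset.range (2*n),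
      |ind (d.A n i ω = (if a then (1:ℝ) else 0)) * d.Dobs n i ω| ≤ 1 := by
  refine (Filter.eventually_all_finset _).2 fun i hi => ?_
  filter_upwards [bin_Dobs hiid h2 (Finset.mem_range.1 hi)] with ω hb
  refine abs_mul_le_one' abs_ind_le_one ?_
  rcases hb with h | h <;> rw [h] <;> norm_num

lemma abs_phiHat_le (hiid : d.IID P) (h2 : d.Assumption2 P) (a : Bool) (n : ℕ) :
    ∀ᵐ ω ∂P, |d.phiHat n (if a then (1:ℝ) else 0) ω| ≤ 2 := by
  filter_upwards [abs_T_ae hiid h2 a n] with ω hω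
  show |(n:ℝ)⁻¹ * ∑ i ∈ Finset.range (2*n),
    ind (d.A n i ω = (if a then (1:ℝ) else 0)) * d.Dobs n i ω| ≤ 2
  rw [abs_mul, abs_of_nonneg (by positivity : (0:ℝ) ≤ (n:ℝ)⁻¹)]
  have h1 : |∑ i ∈ Finset.range (2*n),
      ind (d.A n i ω = (if a then (1:ℝ) else 0)) * d.Dobs n i ω| ≤ 2*(n:ℝ) := by
    refine (Finset.abs_sum_le_sum_abs _ _).trans ?_
    calc ∑ i ∈ Finset.range (2*n),
        |ind (d.A n i ω = (if a then (1:ℝ) else 0)) * d.Dobs n i ω|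
        ≤ ∑ _i ∈ Finset.range (2*n), (1:ℝ) := Finset.sum_le_sum hω
      _ = 2*(n:ℝ) := by rw [Finset.sum_const, Finset.card_range]; push_cast; ring
  calc (n:ℝ)⁻¹ * |∑ i ∈ Finset.range (2*n),
      ind (d.A n i ω = (if a then (1:ℝ) else 0)) * d.Dobs n i ω|
      ≤ (n:ℝ)⁻¹ * (2*(n:ℝ)) := by
        exact mul_le_mul_of_nonneg_left h1 (by positivity)
    _ ≤ 2 := by
        rcases Nat.eq_zero_or_pos n with h | h
        · subst h; simp
        · have hne : (n:ℝ) ≠ 0 := by positivity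
          rw [show (n:ℝ)⁻¹ * (2*(n:ℝ)) = 2 * ((n:ℝ)⁻¹ * (n:ℝ)) by ring,
            inv_mul_cancel₀ hne, mul_one]

/-- The second-moment bound: `E[(φ̂_n(a) − E[D(a)])²] ≤ 1/n`. -/
lemma sq_integral_phiHat (hiid : d.IID P) (h2 : d.Assumption2 P) (a : Bool) {n : ℕ}
    (hn : 1 ≤ n) :
    ∫ ω, (d.phiHat n (if a then (1:ℝ) else 0) ω - ∫ x, d.Dpo a 0 x ∂P)^2 ∂P
      ≤ 1/(n:ℝ) := by
  have hn0 : (0:ℝ) < (n:ℝ) := by exact_mod_cast hn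
  have hne : (n:ℝ) ≠ 0 := ne_of_gt hn0
  set μa := ∫ x, d.Dpo a 0 x ∂P with hμdef
  have hμ0 : 0 ≤ μa := Dpo_mean_nonneg hiid a
  have hμ1 : μa ≤ 1 := Dpo_mean_le_one hiid a
  set T : ℕ → Ω → ℝ := fun i ω =>
    ind (d.A n i ω = (if a then (1:ℝ) else 0)) * d.Dobs n i ω with hTdef
  have hTmeas : ∀ i, Measurable (T i) := fun i =>
    (measurable_ind (measurableSet_eq_c (h2.Ameas n i) _)).mul (meas_Dobs hiid h2 n i)
  have hTint : ∀ i ∈ Finset.range (2*n), Integrable (T i) P := by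
    intro i hi
    refine integrable_of_bdd (C := 1) (hTmeas i).aestronglyMeasurable ?_
    filter_upwards [abs_T_ae hiid h2 a n] with ω hω using hω i hi
  have hTTint : ∀ p ∈ (Finset.range (2*n)) ×ˢ (Finset.range (2*n)),
      Integrable (fun ω => T p.1 ω * T p.2 ω) P := by
    intro p hp
    rw [Finset.mem_product] at hp
    refine integrable_of_bdd (C := 1)
      ((hTmeas p.1).mul (hTmeas p.2)).aestronglyMeasurable ?_
    filter_upwards [abs_T_ae hiid h2 a n] with ω hω
    exact abs_mul_le_one' (hω p.1 hp.1) (hω p.2 hp.2)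
  set S : Ω → ℝ := fun ω => ∑ i ∈ Finset.range (2*n), T i ω with hSdef
  have hSmeas : Measurable S := Finset.measurable_sum _ fun i _ => hTmeas i
  have hSabs : ∀ᵐ ω ∂P, |S ω| ≤ 2*(n:ℝ) := by
    filter_upwards [abs_T_ae hiid h2 a n] with ω hω
    refine (Finset.abs_sum_le_sum_abs _ _).trans ?_
    calc ∑ i ∈ Finset.range (2*n), |T i ω| ≤ ∑ _i ∈ Finset.range (2*n), (1:ℝ) :=
          Finset.sum_le_sum hω
      _ = 2*(n:ℝ) := by rw [Finset.sum_const, Finset.card_range]; push_cast; ring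
  have hSint : Integrable S P := by
    refine integrable_of_bdd (C := 2*(n:ℝ)) hSmeas.aestronglyMeasurable hSabs
  have hS2int : Integrable (fun ω => (S ω)^2) P := by
    refine integrable_of_bdd (C := (2*(n:ℝ))^2)
      ((hSmeas.pow_const 2).aestronglyMeasurable) ?_
    filter_upwards [hSabs] with ω hω
    rw [abs_of_nonneg (sq_nonneg _), ← sq_abs]
    exact pow_le_pow_left₀ (abs_nonneg _) hω 2
  -- first moment
  have hsum1 : ∫ ω, S ω ∂P = (n:ℝ) * μa := by
    rw [hSdef]
    rw [integral_finset_sum _ hTint]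
    have hterm : ∀ i ∈ Finset.range (2*n), ∫ ω, T i ω ∂P = μa/2 :=
      fun i hi => integral_T hiid h2 a (Finset.mem_range.1 hi)
    rw [Finset.sum_congr rfl hterm, Finset.sum_const, Finset.card_range]
    push_cast; ring
  -- second moment
  have hsum2 : ∫ ω, (S ω)^2 ∂P ≤ (n:ℝ)^2*μa^2 + (n:ℝ)*μa := by
    have hexp : ∀ ω, (S ω)^2
        = ∑ p ∈ (Finset.range (2*n)) ×ˢ (Finset.range (2*n)), T p.1 ω * T p.2 ω := by
      intro ω
      rw [hSdef, sq, Finset.sum_mul_sum, Finset.sum_product]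
    calc ∫ ω, (S ω)^2 ∂P
        = ∫ ω, ∑ p ∈ (Finset.range (2*n)) ×ˢ (Finset.range (2*n)), T p.1 ω * T p.2 ω ∂P :=
          integral_congr_ae (ae_of_all _ hexp)
      _ = ∑ p ∈ (Finset.range (2*n)) ×ˢ (Finset.range (2*n)), ∫ ω, T p.1 ω * T p.2 ω ∂P :=
          integral_finset_sum _ hTTint
      _ ≤ ∑ p ∈ (Finset.range (2*n)) ×ˢ (Finset.range (2*n)),
          (μa^2/4 + if p.1 = p.2 then μa/2 else 0) := by
          refine Finset.sum_le_sum fun p hp => ?_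
          rw [Finset.mem_product] at hp
          have hp1 := Finset.mem_range.1 hp.1
          have hp2 := Finset.mem_range.1 hp.2
          by_cases hpe : p.1 = p.2
          · rw [if_pos hpe]
            have he : ∫ ω, T p.1 ω * T p.2 ω ∂P = μa/2 := by
              rw [← hpe]
              rw [integral_congr_ae (T_sq_ae hiid h2 a hp1)]
              exact integral_T hiid h2 a hp1
            rw [he]
            have := sq_nonneg μa
            linarith
          · rw [if_neg hpe]
            rw [add_zero]
            exact integral_TT_le hiid h2 a hp1 hp2 hpe
      _ = (n:ℝ)^2*μa^2 + (n:ℝ)*μa := by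
          rw [Finset.sum_add_distrib, Finset.sum_const, Finset.card_product,
            Finset.card_range]
          have hdiag : ∑ p ∈ (Finset.range (2*n)) ×ˢ (Finset.range (2*n)),
              (if p.1 = p.2 then μa/2 else 0) = (2*n : ℕ) * (μa/2) := by
            rw [Finset.sum_product]
            have hinner : ∀ i ∈ Finset.range (2*n),
                ∑ j ∈ Finset.range (2*n), (if i = j then μa/2 else 0) = μa/2 := by
              intro i hi
              rw [Finset.sum_ite_eq (Finset.range (2*n)) i (fun _ => μa/2), if_pos hi]
            rw [Finset.sum_congr rfl hinner, Finset.sum_const, Finset.card_range,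
              nsmul_eq_mul]
          rw [hdiag]
          push_cast
          ring
  -- expand the square and conclude
  have hexp2 : ∫ ω, (d.phiHat n (if a then (1:ℝ) else 0) ω - μa)^2 ∂P
      = ∫ ω, (((n:ℝ)⁻¹)^2 * (S ω)^2 - (2*μa*(n:ℝ)⁻¹) * S ω + μa^2) ∂P := by
    refine integral_congr_ae (ae_of_all _ fun ω => ?_)
    show ((n:ℝ)⁻¹ * S ω - μa)^2 = _
    ring
  have hint1 : Integrable (fun ω => ((n:ℝ)⁻¹)^2 * (S ω)^2) P := hS2int.const_mul _
  have hint2 : Integrable (fun ω => (2*μa*(n:ℝ)⁻¹) * S ω) P := hSint.const_mul _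
  have hint12 : Integrable (fun ω => ((n:ℝ)⁻¹)^2 * (S ω)^2 - (2*μa*(n:ℝ)⁻¹) * S ω) P :=
    hint1.sub hint2
  rw [hexp2, integral_add hint12 (integrable_const _),
    integral_sub hint1 hint2, integral_const_mul, integral_const_mul, hsum1,
    integral_const]
  simp only [measure_univ, ENNReal.toReal_one, probReal_univ, smul_eq_mul, one_mul]
  have hb2 : ((n:ℝ)⁻¹)^2 * (∫ ω, (S ω)^2 ∂P)
      ≤ ((n:ℝ)⁻¹)^2 * ((n:ℝ)^2*μa^2 + (n:ℝ)*μa) :=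
    mul_le_mul_of_nonneg_left hsum2 (by positivity)
  have hsimp : ((n:ℝ)⁻¹)^2 * ((n:ℝ)^2*μa^2 + (n:ℝ)*μa)
      - 2*μa*(n:ℝ)⁻¹*((n:ℝ)*μa) + μa^2 = μa/(n:ℝ) := by
    field_simp
    ring
  have hfinal : μa/(n:ℝ) ≤ 1/(n:ℝ) := by gcongr
  linarith [hb2, hfinal, hsimp]

/-- `P(C = 1)` is the difference of take-up means. -/
lemma pC_eq (hiid : d.IID P) (h1 : d.Assumption1 P) :
    d.pC P = (∫ ω, d.Dpo true 0 ω ∂P) - ∫ ω, d.Dpo false 0 ω ∂P := by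
  have hd : (fun ω => d.Dpo true 0 ω - d.Dpo false 0 ω)
      =ᵐ[P] (fun ω => ind (d.D1 0 ω = 1 ∧ d.D0 0 ω = 0)) := by
    filter_upwards [hiid.bin1, hiid.bin0, h1.mono] with ω hb1 hb0 hm
    show d.D1 0 ω - d.D0 0 ω = ind (d.D1 0 ω = 1 ∧ d.D0 0 ω = 0)
    rcases hb1 with h1' | h1' <;> rcases hb0 with h0' | h0'
    · rw [h1', h0', ind_of_not (fun hc => absurd hc.1 (by norm_num))]
      ring
    · exfalso
      rw [h1', h0'] at hm
      norm_num at hm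
    · rw [h1', h0', ind_of ⟨rfl, rfl⟩]
      ring
    · rw [h1', h0', ind_of_not (fun hc => absurd hc.2 (by norm_num))]
      ring
  have hmeasC : MeasurableSet (d.cEvent) :=
    (measurableSet_eq_c (meas_D1' hiid 0) 1).inter (measurableSet_eq_c (meas_D0' hiid 0) 0)
  have hindC : (fun ω => ind (d.D1 0 ω = 1 ∧ d.D0 0 ω = 0))
      = (d.cEvent).indicator (fun _ => (1:ℝ)) := by
    funext ω
    rw [indicator_eq_ind]
    exact ind_congr Iff.rfl
  have hstep : (∫ ω, d.Dpo true 0 ω ∂P) - ∫ ω, d.Dpo false 0 ω ∂P = (P d.cEvent).toReal := by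
    rw [← integral_sub (int_Dpo hiid true 0) (int_Dpo hiid false 0),
      integral_congr_ae hd, hindC]
    exact integral_indicator_one hmeasC
  rw [Data.pC, hstep]

end DSide

end PairCore

/-- Under Assumption 1 on `Q` and Assumptions 2–3 on the treatment
assignment mechanism, `φ̂_n(a) → E[D_i(a)]` in probability for `a ∈ {0,1}`, and
consequently `φ̂_n(1) − φ̂_n(0) → P(C_i = 1)` in probability. -/
theorem phiHat_consistency
    {Ω : Type*} [m0 : MeasurableSpace Ω] [StandardBorelSpace Ω] {kx kw : ℕ}
    (d : Data Ω kx kw) (P : Measure Ω) [IsProbabilityMeasure P]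
    (hiid : d.IID P) (h1 : d.Assumption1 P) (h2 : d.Assumption2 P) (h3 : d.Assumption3 P) :
    (∀ a : Bool,
      TendstoInMeasure P (fun n => d.phiHat n (if a then 1 else 0)) Filter.atTop
        (fun _ => ∫ ω, d.Dpo a 0 ω ∂P))
    ∧ TendstoInMeasure P (fun n ω => d.phiHat n 1 ω - d.phiHat n 0 ω) Filter.atTop
        (fun _ => d.pC P) := by
  have main : ∀ a : Bool,
      TendstoInMeasure P (fun n => d.phiHat n (if a then 1 else 0)) Filter.atTop
        (fun _ => ∫ ω, d.Dpo a 0 ω ∂P) := by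
    intro a
    refine tendstoInMeasure_of_sq_integral ?_ ?_ ?_
    · intro n
      exact (meas_phiHat hiid h2 n _).aestronglyMeasurable
    · intro n
      refine integrable_of_bdd (C := 9)
        ((((meas_phiHat hiid h2 n _).sub measurable_const).pow_const 2).aestronglyMeasurable)
        ?_
      filter_upwards [abs_phiHat_le hiid h2 a n] with ω hω
      have hμ0 : 0 ≤ ∫ ω, d.Dpo a 0 ω ∂P := Dpo_mean_nonneg hiid a
      have hμ1 : (∫ ω, d.Dpo a 0 ω ∂P) ≤ 1 := Dpo_mean_le_one hiid a
      have habs : |d.phiHat n (if a then 1 else 0) ω - ∫ ω, d.Dpo a 0 ω ∂P| ≤ 3 := by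
        refine (abs_sub _ _).trans ?_
        have : |∫ ω, d.Dpo a 0 ω ∂P| ≤ 1 := by
          rw [abs_of_nonneg hμ0]; exact hμ1
        linarith
      rw [abs_of_nonneg (sq_nonneg _), ← sq_abs]
      calc |d.phiHat n (if a then 1 else 0) ω - ∫ ω, d.Dpo a 0 ω ∂P|^2 ≤ 3^2 :=
            pow_le_pow_left₀ (abs_nonneg _) habs 2
        _ = 9 := by norm_num
    · intro n hn
      exact sq_integral_phiHat hiid h2 a hn
  refine ⟨main, ?_⟩
  have hsub := tendstoInMeasure_sub (main true) (main false)
  have hpc : d.pC P = (∫ ω, d.Dpo true 0 ω ∂P) - ∫ ω, d.Dpo false 0 ω ∂P := pC_eq hiid h1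
  rw [hpc]
  exact hsub

end MPIV
end
end

section
/- Let (Y(1), Y(0), D(1), D(0)) be a random vector with Y(d) ∈ ℝ integrable and D(a) ∈ {0,1}, satisfying P(D(1) ≥ D(0)) = 1 and P(C = 1) > 0, where C = 1{D(1) = 1, D(0) = 0}. Define Δ = E[Y(1) − Y(0) | C = 1], Ỹ(a) = Y(1)D(a) + Y(0)(1 − D(a)), and Y*(a) = Ỹ(a) − Δ·D(a). Then E[Y*(1)] = E[Y*(0)]; equivalently, E[Ỹ(1) − Ỹ(0)] = Δ·E[D(1) − D(0)]. -/
open MeasureTheory ProbabilityTheory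
open scoped Classical

/-- Under monotonicity `P(D(1) ≥ D(0)) = 1` and relevance `P(C = 1) > 0`,
the transformed potential outcomes `Y*(a) = Ỹ(a) − Δ·D(a)` have equal means:
`E[Y*(1)] = E[Y*(0)]`; equivalently `E[Ỹ(1) − Ỹ(0)] = Δ·E[D(1) − D(0)]`, where
`Δ = E[Y(1) − Y(0) | C = 1]` and `Ỹ(a) = Y(1)D(a) + Y(0)(1 − D(a))`. -/
theorem transformed_outcomes_equal_means
    {Ω : Type*} [MeasurableSpace Ω] (P : Measure Ω) [IsProbabilityMeasure P]
    (Y1 Y0 D1 D0 : Ω → ℝ)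
    (hY1m : Measurable Y1) (hY0m : Measurable Y0)
    (hD1m : Measurable D1) (hD0m : Measurable D0)
    (hY1i : Integrable Y1 P) (hY0i : Integrable Y0 P)
    (hD1b : ∀ᵐ ω ∂P, D1 ω = 0 ∨ D1 ω = 1) (hD0b : ∀ᵐ ω ∂P, D0 ω = 0 ∨ D0 ω = 1)
    (hmono : ∀ᵐ ω ∂P, D0 ω ≤ D1 ω)
    (hrel : 0 < P {ω | D1 ω = 1 ∧ D0 ω = 0})
    (Δ : ℝ)
    (hΔ : Δ = (∫ ω, (Y1 ω - Y0 ω) * (if D1 ω = 1 ∧ D0 ω = 0 then (1 : ℝ) else 0) ∂P)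
        / (P {ω | D1 ω = 1 ∧ D0 ω = 0}).toReal) :
    (∫ ω, ((Y1 ω * D1 ω + Y0 ω * (1 - D1 ω)) - Δ * D1 ω) ∂P)
      = (∫ ω, ((Y1 ω * D0 ω + Y0 ω * (1 - D0 ω)) - Δ * D0 ω) ∂P)
    ∧ (∫ ω, ((Y1 ω * D1 ω + Y0 ω * (1 - D1 ω)) - (Y1 ω * D0 ω + Y0 ω * (1 - D0 ω))) ∂P)
      = Δ * ∫ ω, (D1 ω - D0 ω) ∂P := by
  have hC : MeasurableSet {ω | D1 ω = 1 ∧ D0 ω = 0} :=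
    (hD1m (measurableSet_singleton (1:ℝ))).inter (hD0m (measurableSet_singleton (0:ℝ)))
  set C : Set Ω := {ω | D1 ω = 1 ∧ D0 ω = 0} with hCdef
  have hPCt : (P C).toReal ≠ 0 :=
    (ENNReal.toReal_pos hrel.ne' (measure_ne_top P C)).ne'
  -- integrability facts
  have hD1i : Integrable D1 P := by
    refine (integrable_const (1:ℝ)).mono hD1m.aestronglyMeasurable ?_
    filter_upwards [hD1b] with ω h
    rcases h with h | h <;> simp [h]
  have hD0i : Integrable D0 P := by
    refine (integrable_const (1:ℝ)).mono hD0m.aestronglyMeasurable ?_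
    filter_upwards [hD0b] with ω h
    rcases h with h | h <;> simp [h]
  have habs : ∀ (Y D : Ω → ℝ), (∀ᵐ ω ∂P, D ω = 0 ∨ D ω = 1) → Integrable Y P →
      Measurable Y → Measurable D → Integrable (fun ω => Y ω * D ω) P := by
    intro Y D hb hYi hYm hDm
    refine hYi.mono (hYm.mul hDm).aestronglyMeasurable ?_
    filter_upwards [hb] with ω h
    rcases h with h | h <;> simp [h, abs_nonneg]
  have hY1D1 := habs Y1 D1 hD1b hY1i hY1m hD1m
  have hY1D0 := habs Y1 D0 hD0b hY1i hY1m hD0m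
  have hY0D1 := habs Y0 D1 hD1b hY0i hY0m hD1m
  have hY0D0 := habs Y0 D0 hD0b hY0i hY0m hD0m
  have hY01D1 : Integrable (fun ω => Y0 ω * (1 - D1 ω)) P := by
    have : (fun ω => Y0 ω * (1 - D1 ω)) = fun ω => Y0 ω - Y0 ω * D1 ω := by
      funext ω; ring
    rw [this]; exact hY0i.sub hY0D1
  have hY01D0 : Integrable (fun ω => Y0 ω * (1 - D0 ω)) P := by
    have : (fun ω => Y0 ω * (1 - D0 ω)) = fun ω => Y0 ω - Y0 ω * D0 ω := by
      funext ω; ring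
    rw [this]; exact hY0i.sub hY0D0
  -- key a.e. identity : D1 - D0 is the indicator of C
  have hind : ∀ᵐ ω ∂P, D1 ω - D0 ω = (if D1 ω = 1 ∧ D0 ω = 0 then (1:ℝ) else 0) := by
    filter_upwards [hD1b, hD0b, hmono] with ω h1 h0 hm
    rcases h1 with h | h <;> rcases h0 with g | g
    · simp [h, g]
    · rw [h, g] at hm; norm_num at hm
    · simp [h, g]
    · simp [h, g]
  -- integral of the indicator
  have hIind : ∫ ω, (if D1 ω = 1 ∧ D0 ω = 0 then (1:ℝ) else 0) ∂P = (P C).toReal := by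
    have heq : (fun ω => if D1 ω = 1 ∧ D0 ω = 0 then (1:ℝ) else 0)
        = C.indicator (fun _ => (1:ℝ)) := by
      funext ω
      by_cases h : D1 ω = 1 ∧ D0 ω = 0 <;> simp [Set.indicator, hCdef, Set.mem_setOf_eq, h]
    rw [heq, integral_indicator_const (1:ℝ) hC]
    simp
    rfl
  -- integrability of the indicator and the weighted indicator
  have hindInt : Integrable (fun ω => if D1 ω = 1 ∧ D0 ω = 0 then (1:ℝ) else 0) P := by
    have heq : (fun ω => if D1 ω = 1 ∧ D0 ω = 0 then (1:ℝ) else 0)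
        = C.indicator (fun _ => (1:ℝ)) := by
      funext ω
      by_cases h : D1 ω = 1 ∧ D0 ω = 0 <;> simp [Set.indicator, hCdef, Set.mem_setOf_eq, h]
    rw [heq]
    exact (integrable_const (1:ℝ)).indicator hC
  -- ∫ (D1 - D0) = P(C).toReal
  have hID : ∫ ω, (D1 ω - D0 ω) ∂P = (P C).toReal := by
    rw [integral_congr_ae hind, hIind]
  -- ∫ (Y1 - Y0) * (D1 - D0) = Δ * P(C).toReal
  have hIYD : ∫ ω, (Y1 ω - Y0 ω) * (D1 ω - D0 ω) ∂P = Δ * (P C).toReal := by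
    have hcong : ∀ᵐ ω ∂P, (Y1 ω - Y0 ω) * (D1 ω - D0 ω)
        = (Y1 ω - Y0 ω) * (if D1 ω = 1 ∧ D0 ω = 0 then (1:ℝ) else 0) := by
      filter_upwards [hind] with ω h; rw [h]
    rw [integral_congr_ae hcong, hΔ]
    field_simp
  -- second claim
  have hsecond : (∫ ω, ((Y1 ω * D1 ω + Y0 ω * (1 - D1 ω)) - (Y1 ω * D0 ω + Y0 ω * (1 - D0 ω))) ∂P)
      = Δ * ∫ ω, (D1 ω - D0 ω) ∂P := by
    have heq : (fun ω => (Y1 ω * D1 ω + Y0 ω * (1 - D1 ω)) - (Y1 ω * D0 ω + Y0 ω * (1 - D0 ω)))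
        = fun ω => (Y1 ω - Y0 ω) * (D1 ω - D0 ω) := by
      funext ω; ring
    rw [heq, hIYD, hID]
  have hadd1 : Integrable (fun ω => Y1 ω * D1 ω + Y0 ω * (1 - D1 ω)) P := hY1D1.add hY01D1
  have hadd0 : Integrable (fun ω => Y1 ω * D0 ω + Y0 ω * (1 - D0 ω)) P := hY1D0.add hY01D0
  refine ⟨?_, hsecond⟩
  -- split the integrals in the first claim
  have h1 : ∫ ω, ((Y1 ω * D1 ω + Y0 ω * (1 - D1 ω)) - Δ * D1 ω) ∂P
      = (∫ ω, Y1 ω * D1 ω ∂P) + (∫ ω, Y0 ω * (1 - D1 ω) ∂P) - Δ * ∫ ω, D1 ω ∂P := by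
    rw [integral_sub hadd1 (hD1i.const_mul Δ), integral_add hY1D1 hY01D1,
      integral_const_mul]
  have h0 : ∫ ω, ((Y1 ω * D0 ω + Y0 ω * (1 - D0 ω)) - Δ * D0 ω) ∂P
      = (∫ ω, Y1 ω * D0 ω ∂P) + (∫ ω, Y0 ω * (1 - D0 ω) ∂P) - Δ * ∫ ω, D0 ω ∂P := by
    rw [integral_sub hadd0 (hD0i.const_mul Δ), integral_add hY1D0 hY01D0,
      integral_const_mul]
  have h2 : (∫ ω, Y1 ω * D1 ω ∂P) + (∫ ω, Y0 ω * (1 - D1 ω) ∂P)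
      - ((∫ ω, Y1 ω * D0 ω ∂P) + (∫ ω, Y0 ω * (1 - D0 ω) ∂P))
      = Δ * ((∫ ω, D1 ω ∂P) - ∫ ω, D0 ω ∂P) := by
    have ha : ∫ ω, ((Y1 ω * D1 ω + Y0 ω * (1 - D1 ω)) - (Y1 ω * D0 ω + Y0 ω * (1 - D0 ω))) ∂P
        = (∫ ω, Y1 ω * D1 ω ∂P) + (∫ ω, Y0 ω * (1 - D1 ω) ∂P)
          - ((∫ ω, Y1 ω * D0 ω ∂P) + (∫ ω, Y0 ω * (1 - D0 ω) ∂P)) := by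
      rw [integral_sub hadd1 hadd0, integral_add hY1D1 hY01D1,
        integral_add hY1D0 hY01D0]
    have hb : ∫ ω, (D1 ω - D0 ω) ∂P = (∫ ω, D1 ω ∂P) - ∫ ω, D0 ω ∂P :=
      integral_sub hD1i hD0i
    rw [← ha, hsecond, hb]
  rw [h1, h0]; linarith
end

section
/- Let 𝒢 ⊆ ℋ be sub-σ-algebras on a probability space, S a square-integrable real random variable, and ζ an ℝ^p-valued, ℋ-measurable, square-integrable random vector such that M = E[Var[ζ|𝒢]] = E[(ζ − E[ζ|𝒢])(ζ − E[ζ|𝒢])'] is nonsingular. Then the function b ↦ E[Var[E[S|ℋ] − ζ'b | 𝒢]] over b ∈ ℝ^p is minimized at b* = M^{−1}E[Cov[ζ, S | 𝒢]], where Cov[ζ, S | 𝒢] = E[ζS|𝒢] − E[ζ|𝒢]E[S|𝒢]. -/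
open MeasureTheory ProbabilityTheory Matrix

lemma mul_integrable_of_memL2 {Ω : Type*} [m0 : MeasurableSpace Ω] {μ : Measure Ω}
    [IsProbabilityMeasure μ] {f g : Ω → ℝ} (hf : MemLp f 2 μ) (hg : MemLp g 2 μ) :
    Integrable (fun ω => f ω * g ω) μ := by
  have h : MemLp (g • f) 1 μ := hf.smul hg
  have := memLp_one_iff_integrable.mp h
  exact (by simpa [smul_eq_mul, mul_comm] using this : Integrable (f * g) μ)

lemma memL2_condexp {Ω : Type*} {m : MeasurableSpace Ω} [m0 : MeasurableSpace Ω]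
    {μ : Measure Ω} [IsProbabilityMeasure μ] (hm : m ≤ m0) {f : Ω → ℝ} (hf : MemLp f 2 μ) :
    MemLp (μ[f|m]) 2 μ := by
  set fL : Lp ℝ 2 μ := hf.toLp f with hfL
  set gL : Lp ℝ 2 μ := (condExpL2 ℝ ℝ hm fL : Lp ℝ 2 μ) with hgL
  have hae : (gL : Ω → ℝ) =ᵐ[μ] μ[f|m] := by
    refine ae_eq_condExp_of_forall_setIntegral_eq hm (hf.integrable one_le_two)
      (fun s _ _ => (integrable_condExpL2_of_isFiniteMeasure hm).integrableOn)
      (fun s hs hμs => ?_) (aestronglyMeasurable_condExpL2 hm fL)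
    rw [integral_condExpL2_eq hm fL hs hμs.ne]
    exact setIntegral_congr_ae (hm s hs) ((MemLp.coeFn_toLp hf).mono fun x hx _ => hx)
  exact (Lp.memLp gL).ae_eq hae

/-- Pull-out: `∫ f·g = ∫ E[f|m]·g` for `m`-measurable square-integrable `g`. -/
lemma integral_mul_condexp_eq {Ω : Type*} {m : MeasurableSpace Ω} [m0 : MeasurableSpace Ω]
    {μ : Measure Ω} [IsProbabilityMeasure μ] (hm : m ≤ m0) {f g : Ω → ℝ}
    (hf : MemLp f 2 μ) (hg : MemLp g 2 μ) (hgm : StronglyMeasurable[m] g) :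
    ∫ ω, f ω * g ω ∂μ = ∫ ω, (μ[f|m]) ω * g ω ∂μ := by
  have hfg : Integrable (g * f) μ := by
    have := mul_integrable_of_memL2 hg hf
    simpa [Pi.mul_def] using this
  have h := condExp_mul_of_stronglyMeasurable_left (m := m) hgm hfg (hf.integrable one_le_two)
  calc ∫ ω, f ω * g ω ∂μ = ∫ ω, (g * f) ω ∂μ := by
        simp only [Pi.mul_apply, mul_comm]
    _ = ∫ ω, (μ[g * f|m]) ω ∂μ := (integral_condExp hm).symm
    _ = ∫ ω, (g * μ[f|m]) ω ∂μ := integral_congr_ae h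
    _ = ∫ ω, (μ[f|m]) ω * g ω ∂μ := by simp only [Pi.mul_apply, mul_comm]

/-- For sub-σ-algebras `𝒢 ⊆ ℋ`, a square-integrable `S`, and an
`ℝ^p`-valued `ℋ`-measurable square-integrable `ζ` with `M = E[Var[ζ|𝒢]]` nonsingular,
the map `b ↦ E[Var[E[S|ℋ] − ζ'b | 𝒢]]` is minimized at `b* = M⁻¹ E[Cov[ζ, S|𝒢]]`.
Here `E[Var[W|𝒢]]` is written in its equivalent form `E[(W − E[W|𝒢])²]` and
`Cov[ζ, S|𝒢] = E[ζS|𝒢] − E[ζ|𝒢]E[S|𝒢]`. -/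
theorem optimal_linear_adjustment_coefficient
    {Ω : Type*} [m0 : MeasurableSpace Ω] (μ : Measure Ω) [IsProbabilityMeasure μ]
    (G H : MeasurableSpace Ω) (hGH : G ≤ H) (hH : H ≤ m0)
    (p : ℕ) (S : Ω → ℝ) (hS : MemLp S 2 μ)
    (ζ : Ω → Fin p → ℝ) (hζmeas : Measurable[H] ζ)
    (hζ2 : ∀ j, MemLp (fun ω => ζ ω j) 2 μ)
    (M : Matrix (Fin p) (Fin p) ℝ)
    (hM : M = fun j k => ∫ ω, (ζ ω j - (μ[fun ω => ζ ω j|G]) ω)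
        * (ζ ω k - (μ[fun ω => ζ ω k|G]) ω) ∂μ)
    (hMinv : IsUnit M.det)
    (bstar : Fin p → ℝ)
    (hbstar : bstar = M⁻¹ *ᵥ fun j =>
        ∫ ω, ((μ[fun ω => ζ ω j * S ω|G]) ω - (μ[fun ω => ζ ω j|G]) ω * (μ[S|G]) ω) ∂μ) :
    ∀ b : Fin p → ℝ,
      (∫ ω, (((μ[S|H]) ω - ζ ω ⬝ᵥ bstar)
          - (μ[fun ω => (μ[S|H]) ω - ζ ω ⬝ᵥ bstar|G]) ω) ^ 2 ∂μ)
      ≤ ∫ ω, (((μ[S|H]) ω - ζ ω ⬝ᵥ b)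
          - (μ[fun ω => (μ[S|H]) ω - ζ ω ⬝ᵥ b|G]) ω) ^ 2 ∂μ := by
  intro b
  have hGle : G ≤ m0 := hGH.trans hH
  -- basic square integrability facts
  have hT2 : MemLp (μ[S|H]) 2 μ := memL2_condexp (m0 := m0) hH hS
  have hSG2 : MemLp (μ[S|G]) 2 μ := memL2_condexp (m0 := m0) hGle hS
  have hζG2 : ∀ j, MemLp (μ[fun ω => ζ ω j|G]) 2 μ := fun j => memL2_condexp (m0 := m0) hGle (hζ2 j)
  set V : Fin p → Ω → ℝ := fun j ω => ζ ω j - (μ[fun ω => ζ ω j|G]) ω with hVdef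
  have hV2 : ∀ j, MemLp (V j) 2 μ := fun j => by
    have := (hζ2 j).sub (hζG2 j); simpa [Pi.sub_def] using this
  set U : Ω → ℝ := fun ω => (μ[S|H]) ω - (μ[S|G]) ω with hUdef
  have hU2 : MemLp U 2 μ := by
    have := hT2.sub hSG2; simpa [Pi.sub_def] using this
  have hζi : ∀ j, Integrable (fun ω => ζ ω j) μ := fun j => (hζ2 j).integrable one_le_two
  have hζjm : ∀ j, StronglyMeasurable[H] (fun ω => ζ ω j) :=
    fun j => ((measurable_pi_apply j).comp hζmeas).stronglyMeasurable
  have hlin2 : ∀ a : Fin p → ℝ, MemLp (fun ω => ∑ j, a j * V j ω) 2 μ := fun a =>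
    memLp_finsetSum _ (fun j _ => (hV2 j).const_mul (a j))
  -- key a.e. identity
  have key : ∀ a : Fin p → ℝ,
      (fun ω => ((μ[S|H]) ω - ζ ω ⬝ᵥ a) - (μ[fun ω => (μ[S|H]) ω - ζ ω ⬝ᵥ a|G]) ω)
        =ᵐ[μ] fun ω => U ω - ∑ j, a j * V j ω := by
    intro a
    have hdoti : Integrable (fun ω => ζ ω ⬝ᵥ a) μ := by
      simp only [dotProduct]
      exact integrable_finset_sum _ (fun j _ => (hζi j).mul_const _)
    have h1 : μ[fun ω => (μ[S|H]) ω - ζ ω ⬝ᵥ a|G]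
        =ᵐ[μ] μ[μ[S|H]|G] - μ[fun ω => ζ ω ⬝ᵥ a|G] :=
      condExp_sub integrable_condExp hdoti G
    have h2 : μ[μ[S|H]|G] =ᵐ[μ] μ[S|G] := condExp_condExp_of_le hGH hH
    have h3 : μ[fun ω => ζ ω ⬝ᵥ a|G]
        =ᵐ[μ] fun ω => ∑ j, a j * (μ[fun ω => ζ ω j|G]) ω := by
      have hrw : (fun ω => ζ ω ⬝ᵥ a) = ∑ j : Fin p, a j • (fun ω => ζ ω j) := by
        funext ω
        simp [dotProduct, Finset.sum_apply, mul_comm]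
      rw [hrw]
      calc μ[∑ j : Fin p, a j • (fun ω => ζ ω j)|G]
          =ᵐ[μ] ∑ j : Fin p, μ[a j • (fun ω => ζ ω j)|G] :=
            condExp_finsetSum (fun j _ => (hζi j).smul (a j)) G
        _ =ᵐ[μ] fun ω => ∑ j, a j * (μ[fun ω => ζ ω j|G]) ω := by
            have h : ∀ j : Fin p, μ[a j • (fun ω => ζ ω j)|G]
                =ᵐ[μ] a j • μ[fun ω => ζ ω j|G] := fun j => condExp_smul (a j) _ G
            have := eventuallyEq_sum (s := (Finset.univ : Finset (Fin p)))
              (fun j _ => h j)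
            refine this.trans ?_
            refine Filter.EventuallyEq.of_eq ?_
            funext ω
            simp [Finset.sum_apply, smul_eq_mul]
    filter_upwards [h1, h2, h3] with ω e1 e2 e3
    have : (μ[fun ω => (μ[S|H]) ω - ζ ω ⬝ᵥ a|G]) ω
        = (μ[S|G]) ω - ∑ j, a j * (μ[fun ω => ζ ω j|G]) ω := by
      rw [e1]; simp only [Pi.sub_apply]; rw [e2, e3]
    rw [this]
    simp only [hUdef, hVdef, dotProduct, mul_sub, Finset.sum_sub_distrib]
    have : ∑ j, ζ ω j * a j = ∑ j, a j * ζ ω j :=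
      Finset.sum_congr rfl fun j _ => mul_comm _ _
    rw [this]; ring
  -- rewrite both sides of the goal
  have hgoal_eq : ∀ a : Fin p → ℝ,
      (∫ ω, (((μ[S|H]) ω - ζ ω ⬝ᵥ a)
          - (μ[fun ω => (μ[S|H]) ω - ζ ω ⬝ᵥ a|G]) ω) ^ 2 ∂μ)
        = ∫ ω, (U ω - ∑ j, a j * V j ω) ^ 2 ∂μ := fun a =>
    integral_congr_ae ((key a).mono fun ω h => by dsimp only at h ⊢; rw [h])
  rw [hgoal_eq b, hgoal_eq bstar]
  -- the cross moments
  set c : Fin p → ℝ := fun j =>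
    ∫ ω, ((μ[fun ω => ζ ω j * S ω|G]) ω - (μ[fun ω => ζ ω j|G]) ω * (μ[S|G]) ω) ∂μ with hc
  have hUV : ∀ j, ∫ ω, U ω * V j ω ∂μ = c j := by
    intro j
    have hZGm : StronglyMeasurable[G] (μ[fun ω => ζ ω j|G]) := stronglyMeasurable_condExp
    have int1 : Integrable (fun ω => (μ[S|H]) ω * ζ ω j) μ :=
      mul_integrable_of_memL2 (m0 := m0) hT2 (hζ2 j)
    have int2 : Integrable (fun ω => (μ[S|H]) ω * (μ[fun ω => ζ ω j|G]) ω) μ :=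
      mul_integrable_of_memL2 (m0 := m0) hT2 (hζG2 j)
    have int3 : Integrable (fun ω => (μ[S|G]) ω * ζ ω j) μ :=
      mul_integrable_of_memL2 (m0 := m0) hSG2 (hζ2 j)
    have int4 : Integrable (fun ω => (μ[S|G]) ω * (μ[fun ω => ζ ω j|G]) ω) μ :=
      mul_integrable_of_memL2 (m0 := m0) hSG2 (hζG2 j)
    have expand : ∫ ω, U ω * V j ω ∂μ
        = ((∫ ω, (μ[S|H]) ω * ζ ω j ∂μ)
            - ∫ ω, (μ[S|H]) ω * (μ[fun ω => ζ ω j|G]) ω ∂μ)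
          - ((∫ ω, (μ[S|G]) ω * ζ ω j ∂μ)
            - ∫ ω, (μ[S|G]) ω * (μ[fun ω => ζ ω j|G]) ω ∂μ) := by
      rw [show (fun ω => U ω * V j ω)
          = fun ω => ((μ[S|H]) ω * ζ ω j - (μ[S|H]) ω * (μ[fun ω => ζ ω j|G]) ω)
            - ((μ[S|G]) ω * ζ ω j - (μ[S|G]) ω * (μ[fun ω => ζ ω j|G]) ω) from
        funext fun ω => by simp only [hUdef, hVdef]; ring]
      have int12 : Integrable (fun ω => (μ[S|H]) ω * ζ ω j
          - (μ[S|H]) ω * (μ[fun ω => ζ ω j|G]) ω) μ := int1.sub int2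
      have int34 : Integrable (fun ω => (μ[S|G]) ω * ζ ω j
          - (μ[S|G]) ω * (μ[fun ω => ζ ω j|G]) ω) μ := int3.sub int4
      rw [integral_sub int12 int34, integral_sub int1 int2, integral_sub int3 int4]
    -- (i) ∫ T ζ_j = ∫ S ζ_j
    have e1 : ∫ ω, (μ[S|H]) ω * ζ ω j ∂μ = ∫ ω, S ω * ζ ω j ∂μ :=
      (integral_mul_condexp_eq (m0 := m0) hH hS (hζ2 j) (hζjm j)).symm
    -- (ii) ∫ T ZG_j = ∫ SG ZG_j
    have e2 : ∫ ω, (μ[S|H]) ω * (μ[fun ω => ζ ω j|G]) ω ∂μ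
        = ∫ ω, (μ[S|G]) ω * (μ[fun ω => ζ ω j|G]) ω ∂μ := by
      rw [← integral_mul_condexp_eq (m0 := m0) hH hS (hζG2 j) (hZGm.mono hGH),
        integral_mul_condexp_eq (m0 := m0) hGle hS (hζG2 j) hZGm]
    -- (iii) ∫ SG ζ_j = ∫ SG ZG_j
    have e3 : ∫ ω, (μ[S|G]) ω * ζ ω j ∂μ
        = ∫ ω, (μ[S|G]) ω * (μ[fun ω => ζ ω j|G]) ω ∂μ := by
      have hSGm : StronglyMeasurable[G] (μ[S|G]) := stronglyMeasurable_condExp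
      have h := integral_mul_condexp_eq (m0 := m0) hGle (hζ2 j) hSG2 hSGm
      calc ∫ ω, (μ[S|G]) ω * ζ ω j ∂μ = ∫ ω, ζ ω j * (μ[S|G]) ω ∂μ := by
            simp only [mul_comm]
        _ = ∫ ω, (μ[fun ω => ζ ω j|G]) ω * (μ[S|G]) ω ∂μ := h
        _ = ∫ ω, (μ[S|G]) ω * (μ[fun ω => ζ ω j|G]) ω ∂μ := by
            simp only [mul_comm]
    -- rhs
    have hcj : c j = (∫ ω, ζ ω j * S ω ∂μ)
        - ∫ ω, (μ[fun ω => ζ ω j|G]) ω * (μ[S|G]) ω ∂μ := by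
      rw [hc]
      dsimp only
      have iA : Integrable (μ[fun ω => ζ ω j * S ω|G]) μ := integrable_condExp
      have iB : Integrable (fun ω => (μ[fun ω => ζ ω j|G]) ω * (μ[S|G]) ω) μ :=
        mul_integrable_of_memL2 (m0 := m0) (hζG2 j) hSG2
      rw [integral_sub iA iB, integral_condExp hGle]
    rw [expand, e1, e2, e3, hcj]
    have : ∫ ω, S ω * ζ ω j ∂μ = ∫ ω, ζ ω j * S ω ∂μ := by simp only [mul_comm]
    rw [this]
    have : ∫ ω, (μ[S|G]) ω * (μ[fun ω => ζ ω j|G]) ω ∂μ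
        = ∫ ω, (μ[fun ω => ζ ω j|G]) ω * (μ[S|G]) ω ∂μ := by simp only [mul_comm]
    rw [this]; ring
  have hVV : ∀ j k, ∫ ω, V j ω * V k ω ∂μ = M j k := by
    intro j k; rw [hM]
  have hMb : M *ᵥ bstar = c := by
    rw [hbstar, Matrix.mulVec_mulVec, Matrix.mul_nonsing_inv M hMinv, Matrix.one_mulVec]
  -- orthogonality of the residual
  set W : Ω → ℝ := fun ω => U ω - ∑ j, bstar j * V j ω with hWdef
  have hW2 : MemLp W 2 μ := by
    have := hU2.sub (hlin2 bstar); simpa [Pi.sub_def] using this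
  have horth : ∀ k, ∫ ω, W ω * V k ω ∂μ = 0 := by
    intro k
    have hexp : (fun ω => W ω * V k ω)
        = fun ω => U ω * V k ω - ∑ j, bstar j * (V j ω * V k ω) := by
      funext ω
      simp only [hWdef, Finset.sum_mul, sub_mul]
      congr 1
      exact Finset.sum_congr rfl fun j _ => by ring
    have hint : ∀ j : Fin p, Integrable (fun ω => bstar j * (V j ω * V k ω)) μ :=
      fun j => (mul_integrable_of_memL2 (m0 := m0) (hV2 j) (hV2 k)).const_mul _
    rw [hexp, integral_sub (mul_integrable_of_memL2 (m0 := m0) hU2 (hV2 k))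
      (integrable_finset_sum _ fun j _ => hint j), integral_finset_sum _ fun j _ => hint j]
    have : ∀ j : Fin p, ∫ ω, bstar j * (V j ω * V k ω) ∂μ = bstar j * M j k := by
      intro j; rw [integral_const_mul, hVV]
    simp_rw [this]
    rw [hUV k]
    have : ∑ j, bstar j * M j k = c k := by
      have := congrFun hMb k
      simp only [Matrix.mulVec, dotProduct] at this
      rw [← this]
      refine Finset.sum_congr rfl fun j _ => ?_
      rw [mul_comm]
      congr 1
      rw [hM]
      exact integral_congr_ae (Filter.EventuallyEq.of_eq (funext fun ω => mul_comm _ _))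
    rw [this, sub_self]
  -- final quadratic expansion
  set d : Fin p → ℝ := fun j => bstar j - b j with hd
  set Z : Ω → ℝ := fun ω => ∑ j, d j * V j ω with hZdef
  have hZ2 : MemLp Z 2 μ := hlin2 d
  have hptw : ∀ ω, U ω - ∑ j, b j * V j ω = W ω + Z ω := by
    intro ω
    simp only [hWdef, hZdef, hd, sub_mul, Finset.sum_sub_distrib]
    ring
  have hWZ : ∫ ω, W ω * Z ω ∂μ = 0 := by
    have hexp : (fun ω => W ω * Z ω) = fun ω => ∑ j, d j * (W ω * V j ω) := by
      funext ω
      simp only [hZdef, Finset.mul_sum]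
      exact Finset.sum_congr rfl fun j _ => by ring
    rw [hexp, integral_finset_sum _
      (fun j _ => (mul_integrable_of_memL2 (m0 := m0) hW2 (hV2 j)).const_mul _)]
    refine Finset.sum_eq_zero fun j _ => ?_
    rw [integral_const_mul, horth j, mul_zero]
  have hsplit : ∫ ω, (U ω - ∑ j, b j * V j ω) ^ 2 ∂μ
      = (∫ ω, W ω ^ 2 ∂μ) + ∫ ω, Z ω ^ 2 ∂μ := by
    have h1 : (fun ω => (U ω - ∑ j, b j * V j ω) ^ 2)
        = fun ω => W ω ^ 2 + (2 * (W ω * Z ω) + Z ω ^ 2) := by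
      funext ω; rw [hptw ω]; ring
    have iWZ : Integrable (fun ω => 2 * (W ω * Z ω)) μ :=
      (mul_integrable_of_memL2 (m0 := m0) hW2 hZ2).const_mul 2
    have irest : Integrable (fun ω => 2 * (W ω * Z ω) + Z ω ^ 2) μ :=
      iWZ.add hZ2.integrable_sq
    rw [h1, integral_add hW2.integrable_sq irest, integral_add iWZ hZ2.integrable_sq,
      integral_const_mul, hWZ]
    ring
  have hWeq : ∫ ω, (U ω - ∑ j, bstar j * V j ω) ^ 2 ∂μ = ∫ ω, W ω ^ 2 ∂μ := rfl
  rw [hWeq, hsplit]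
  have : 0 ≤ ∫ ω, Z ω ^ 2 ∂μ := integral_nonneg fun ω => sq_nonneg _
  linarith
end

section
/- Let (Y(1), Y(0), D(1), D(0), X) be a random vector with Y(d) ∈ ℝ square-integrable, D(a) ∈ {0,1}, satisfying P(D(1) ≥ D(0)) = 1 and P(C = 1) > 0 where C = 1{D(1)=1, D(0)=0}; let A ∈ {0,1} satisfy (Y(1), Y(0), D(1), D(0)) ⫫ A | X and P(A = 1 | X) = 1/2 almost surely; set Ỹ(a) = Y(1)D(a) + Y(0)(1 − D(a)), Δ = E[Y(1) − Y(0) | C = 1], Y*(a) = Ỹ(a) − Δ·D(a), Y = Ỹ(1)A + Ỹ(0)(1−A), and D = D(1)A + D(0)(1−A). Then the semiparametric efficiency bound expression V = P(C=1)^{−2}·E[ (Var[Y|X,A=1] − 2Δ·Cov[Y,D|X,A=1] + Δ²·Var[D|X,A=1])/P(A=1|X) + (Var[Y|X,A=0] − 2Δ·Cov[Y,D|X,A=0] + Δ²·Var[D|X,A=0])/P(A=0|X) ] + P(C=1)^{−2}·E[ (E[Y|X,A=1] − E[Y|X,A=0] − Δ·E[D|X,A=1] + Δ·E[D|X,A=0])²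 ] satisfies V = 2ν², where ν² = P(C=1)^{−2}( E[Var[Y*(1)|X]] + E[Var[Y*(0)|X]] + ½E[((E[Y*(1)|X] − E[Y*(1)]) − (E[Y*(0)|X] − E[Y*(0)]))²] ). -/
open MeasureTheory ProbabilityTheory
open scoped Classical

section AuxEff
variable {α : Type*} {m m0 : MeasurableSpace α} {μ : Measure α}

lemma aux_integrable_mul {f g : α → ℝ} (hf : MemLp f 2 μ) (hg : MemLp g 2 μ) :
    Integrable (fun x => f x * g x) μ := by
  have h : MemLp (g • f) 1 μ := hf.smul hg
    (hpqr := ⟨by simp only [one_div, inv_one]; exact ENNReal.inv_two_add_inv_two⟩)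
  rw [memLp_one_iff_integrable] at h
  have : (g • f) = fun x => g x * f x := rfl
  rw [this] at h
  exact h.congr (by filter_upwards with x using mul_comm _ _)

lemma aux_memℒp_two_condexp (hm : m ≤ m0) [IsProbabilityMeasure μ]
    {f : α → ℝ} (hf : MemLp f 2 μ) : MemLp (μ[f|m]) 2 μ := by
  set fL : Lp ℝ 2 μ := hf.toLp f with hfL
  have hcoe : MemLp ((condExpL2 ℝ ℝ hm fL : Lp ℝ 2 μ) : α → ℝ) 2 μ := Lp.memLp _
  refine hcoe.ae_eq ?_
  refine ae_eq_condExp_of_forall_setIntegral_eq hm (hf.integrable one_le_two)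
    (fun s hs hμs => (hcoe.integrable one_le_two).integrableOn) (fun s hs hμs => ?_)
    (aestronglyMeasurable_condExpL2 hm fL)
  rw [integral_condExpL2_eq_of_fin_meas_real fL hs hμs.ne]
  exact integral_congr_ae (ae_restrict_of_ae hf.coeFn_toLp)

lemma aux_condexp_sub_mul (hm : m ≤ m0) [IsProbabilityMeasure μ]
    {f g : α → ℝ} (hf : Integrable f μ) (hg : Integrable g μ) (a : ℝ) :
    μ[fun x => f x - a * g x|m] =ᵐ[μ] fun x => (μ[f|m]) x - a * (μ[g|m]) x := by
  have hag : Integrable (a • g) μ := hg.smul a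
  have h2 : μ[f - a • g|m] =ᵐ[μ] μ[f|m] - μ[a • g|m] := condExp_sub hf hag m
  have h3 : μ[a • g|m] =ᵐ[μ] a • μ[g|m] := condExp_smul a g m
  have he : (fun x => f x - a * g x) = f - a • g := by funext x; simp
  rw [he]
  filter_upwards [h2, h3] with x e2 e3
  simp only [Pi.sub_apply, Pi.smul_apply, smul_eq_mul] at *
  rw [e2, e3]

lemma aux_condexp_lin (hm : m ≤ m0) [IsProbabilityMeasure μ]
    {f g h : α → ℝ} (hf : Integrable f μ) (hg : Integrable g μ) (hh : Integrable h μ) (a b : ℝ) :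
    μ[fun x => f x - a * g x + b * h x|m]
      =ᵐ[μ] fun x => (μ[f|m]) x - a * (μ[g|m]) x + b * (μ[h|m]) x := by
  have hag : Integrable (a • g) μ := hg.smul a
  have hbh : Integrable (b • h) μ := hh.smul b
  have h1 : μ[f - a • g + b • h|m] =ᵐ[μ] μ[f - a • g|m] + μ[b • h|m] :=
    condExp_add (hf.sub hag) hbh m
  have h2 : μ[f - a • g|m] =ᵐ[μ] μ[f|m] - μ[a • g|m] := condExp_sub hf hag m
  have h3 : μ[a • g|m] =ᵐ[μ] a • μ[g|m] := condExp_smul a g m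
  have h4 : μ[b • h|m] =ᵐ[μ] b • μ[h|m] := condExp_smul b h m
  have he : (fun x => f x - a * g x + b * h x) = f - a • g + b • h := by funext x; simp
  rw [he]
  filter_upwards [h1, h2, h3, h4] with x e1 e2 e3 e4
  simp only [Pi.add_apply, Pi.sub_apply, Pi.smul_apply, smul_eq_mul] at *
  rw [e1, e2, e3, e4]

lemma aux_integral_sub_condexp_sq (hm : m ≤ m0) [IsProbabilityMeasure μ]
    {f : α → ℝ} (hf : MemLp f 2 μ) :
    ∫ x, (f x - (μ[f|m]) x) ^ 2 ∂μ
      = (∫ x, f x ^ 2 ∂μ) - ∫ x, ((μ[f|m]) x) ^ 2 ∂μ := by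
  set g := μ[f|m] with hgdef
  have hg2 : MemLp g 2 μ := aux_memℒp_two_condexp hm hf
  have hif : Integrable f μ := hf.integrable one_le_two
  have higf : Integrable (fun x => g x * f x) μ := aux_integrable_mul hg2 hf
  have hpull : μ[fun x => g x * f x|m] =ᵐ[μ] fun x => g x * g x := by
    have := condExp_mul_of_stronglyMeasurable_left (μ := μ) (f := g) (g := f)
      stronglyMeasurable_condExp (by exact higf) hif
    filter_upwards [this] with x hx
    rw [← hgdef] at hx; exact hx
  have hfg : ∫ x, g x * f x ∂μ = ∫ x, g x ^ 2 ∂μ := by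
    rw [← integral_condExp hm (f := fun x => g x * f x), integral_congr_ae hpull]
    simp_rw [sq]
  have hexp : ∀ x, (f x - g x) ^ 2 = f x ^ 2 - 2 * (g x * f x) + g x ^ 2 := by
    intro x; ring
  simp_rw [hexp]
  have h1 : Integrable (fun x => f x ^ 2 - 2 * (g x * f x)) μ :=
    hf.integrable_sq.sub (higf.const_mul 2)
  have h2 : Integrable (fun x => 2 * (g x * f x)) μ := higf.const_mul 2
  rw [integral_add h1 hg2.integrable_sq, integral_sub hf.integrable_sq h2,
    MeasureTheory.integral_const_mul, hfg]
  ring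

end AuxEff

/-- The semiparametric efficiency bound expression `V` of
Frölich (2007, Theorem 2) for the LATE with propensity score `1/2` satisfies `V = 2ν²`,
where `ν²` is the limiting variance of the Wald estimator under matched pairs.
Conditional moments given `(X, A = a)` are written, as sanctioned by the conditional
independence of `A` and `P(A = 1|X) = 1/2`, as the corresponding conditional moments of the
potential quantities given `σ(X)`; `E[Var[·|X]]` is written as `E[(· − E[·|X])²]`. -/
theorem efficiency_bound_matches_wald_variance
    {Ω : Type*} [m0 : MeasurableSpace Ω] [StandardBorelSpace Ω]
    (P : Measure Ω) [IsProbabilityMeasure P]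
    {kx : ℕ} (Y1 Y0 D1 D0 A : Ω → ℝ) (X : Ω → EuclideanSpace ℝ (Fin kx))
    (hY1m : Measurable Y1) (hY0m : Measurable Y0)
    (hD1m : Measurable D1) (hD0m : Measurable D0)
    (hAm : Measurable A) (hXm : Measurable X)
    (hY1sq : MemLp Y1 2 P) (hY0sq : MemLp Y0 2 P)
    (hD1b : ∀ᵐ ω ∂P, D1 ω = 0 ∨ D1 ω = 1) (hD0b : ∀ᵐ ω ∂P, D0 ω = 0 ∨ D0 ω = 1)
    (hmono : ∀ᵐ ω ∂P, D0 ω ≤ D1 ω)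
    (hrel : 0 < P {ω | D1 ω = 1 ∧ D0 ω = 0})
    (mX : MeasurableSpace Ω) (hmX : mX = MeasurableSpace.comap X inferInstance)
    (hle : mX ≤ m0)
    (hA01 : ∀ᵐ ω ∂P, A ω = 0 ∨ A ω = 1)
    (hcondindep : CondIndepFun mX hle (fun ω => (Y1 ω, Y0 ω, D1 ω, D0 ω)) A P)
    (hhalf : (P[fun ω => (if A ω = 1 then (1 : ℝ) else 0)|mX]) =ᵐ[P] fun _ => (1 / 2 : ℝ))
    (tY1 tY0 : Ω → ℝ)
    (htY1 : tY1 = fun ω => Y1 ω * D1 ω + Y0 ω * (1 - D1 ω))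
    (htY0 : tY0 = fun ω => Y1 ω * D0 ω + Y0 ω * (1 - D0 ω))
    (pc : ℝ) (hpc : pc = (P {ω | D1 ω = 1 ∧ D0 ω = 0}).toReal)
    (Δ : ℝ)
    (hΔ : Δ = (∫ ω, (Y1 ω - Y0 ω) * (if D1 ω = 1 ∧ D0 ω = 0 then (1 : ℝ) else 0) ∂P) / pc)
    (Ys1 Ys0 : Ω → ℝ)
    (hYs1 : Ys1 = fun ω => tY1 ω - Δ * D1 ω) (hYs0 : Ys0 = fun ω => tY0 ω - Δ * D0 ω)
    (V : ℝ)
    (hV : V = pc⁻¹ ^ 2 *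
        (∫ ω, ((((P[fun ω => tY1 ω ^ 2|mX]) ω - ((P[tY1|mX]) ω) ^ 2)
              - 2 * Δ * ((P[fun ω => tY1 ω * D1 ω|mX]) ω - (P[tY1|mX]) ω * (P[D1|mX]) ω)
              + Δ ^ 2 * ((P[fun ω => D1 ω ^ 2|mX]) ω - ((P[D1|mX]) ω) ^ 2)) / (1 / 2)
            + (((P[fun ω => tY0 ω ^ 2|mX]) ω - ((P[tY0|mX]) ω) ^ 2)
              - 2 * Δ * ((P[fun ω => tY0 ω * D0 ω|mX]) ω - (P[tY0|mX]) ω * (P[D0|mX]) ω)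
              + Δ ^ 2 * ((P[fun ω => D0 ω ^ 2|mX]) ω - ((P[D0|mX]) ω) ^ 2)) / (1 / 2)) ∂P)
      + pc⁻¹ ^ 2 *
        ∫ ω, ((P[tY1|mX]) ω - (P[tY0|mX]) ω - Δ * (P[D1|mX]) ω + Δ * (P[D0|mX]) ω) ^ 2 ∂P)
    (ν2 : ℝ)
    (hν2 : ν2 = pc⁻¹ ^ 2 *
        ((∫ ω, (Ys1 ω - (P[Ys1|mX]) ω) ^ 2 ∂P) + (∫ ω, (Ys0 ω - (P[Ys0|mX]) ω) ^ 2 ∂P)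
          + (1 / 2) * ∫ ω, (((P[Ys1|mX]) ω - ∫ x, Ys1 x ∂P)
              - ((P[Ys0|mX]) ω - ∫ x, Ys0 x ∂P)) ^ 2 ∂P)) :
    V = 2 * ν2 := by
  -- basic measurability and positivity
  have hsmeas : MeasurableSet[m0] {ω | D1 ω = 1 ∧ D0 ω = 0} := by
    have : {ω | D1 ω = 1 ∧ D0 ω = 0} = D1 ⁻¹' {1} ∩ D0 ⁻¹' {0} := by
      ext ω; simp [Set.mem_preimage]
    rw [this]
    exact (hD1m (measurableSet_singleton 1)).inter (hD0m (measurableSet_singleton 0))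
  have hpc_pos : 0 < pc := by
    rw [hpc]; exact ENNReal.toReal_pos hrel.ne' (measure_ne_top P _)
  -- L² facts
  have htY1m : Measurable[m0] tY1 := by
    rw [htY1]; exact (hY1m.mul hD1m).add (hY0m.mul (measurable_const.sub hD1m))
  have htY0m : Measurable[m0] tY0 := by
    rw [htY0]; exact (hY1m.mul hD0m).add (hY0m.mul (measurable_const.sub hD0m))
  have habs : MemLp (fun ω => |Y1 ω| + |Y0 ω|) 2 P := by
    exact hY1sq.abs.add hY0sq.abs
  have hbound : ∀ (D : Ω → ℝ) (ω : Ω), D ω = 0 ∨ D ω = 1 →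
      ‖Y1 ω * D ω + Y0 ω * (1 - D ω)‖ ≤ ‖|Y1 ω| + |Y0 ω|‖ := by
    intro D ω h
    have habs' : ‖|Y1 ω| + |Y0 ω|‖ = |Y1 ω| + |Y0 ω| :=
      Real.norm_of_nonneg (by positivity)
    rcases h with h | h <;> rw [h] <;> rw [habs'] <;> rw [Real.norm_eq_abs] <;>
      [ (have : Y1 ω * 0 + Y0 ω * (1 - 0) = Y0 ω := by ring);
        (have : Y1 ω * 1 + Y0 ω * (1 - 1) = Y1 ω := by ring) ] <;> rw [this]
    · have := abs_nonneg (Y1 ω); linarith [le_refl |Y0 ω|]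
    · have := abs_nonneg (Y0 ω); linarith [le_refl |Y1 ω|]
  have htY1sq : MemLp tY1 2 P := by
    refine habs.of_le (htY1m.aestronglyMeasurable (μ := P)) ?_
    filter_upwards [hD1b] with ω h
    rw [htY1]; exact hbound D1 ω h
  have htY0sq : MemLp tY0 2 P := by
    refine habs.of_le (htY0m.aestronglyMeasurable (μ := P)) ?_
    filter_upwards [hD0b] with ω h
    rw [htY0]; exact hbound D0 ω h
  have hDsq : ∀ (D : Ω → ℝ), Measurable[m0] D → (∀ᵐ ω ∂P, D ω = 0 ∨ D ω = 1) →
      MemLp D 2 P := by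
    intro D hDm hDb
    refine (memLp_const (1 : ℝ)).of_le (hDm.aestronglyMeasurable (μ := P)) ?_
    filter_upwards [hDb] with ω h
    rcases h with h | h <;> simp [h]
  have hD1sq : MemLp D1 2 P := hDsq D1 hD1m hD1b
  have hD0sq : MemLp D0 2 P := hDsq D0 hD0m hD0b
  have hYs1sq : MemLp Ys1 2 P := by
    rw [hYs1]; exact htY1sq.sub (hD1sq.const_mul Δ)
  have hYs0sq : MemLp Ys0 2 P := by
    rw [hYs0]; exact htY0sq.sub (hD0sq.const_mul Δ)
  -- integrability
  have itY1 : Integrable tY1 P := htY1sq.integrable one_le_two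
  have itY0 : Integrable tY0 P := htY0sq.integrable one_le_two
  have iD1 : Integrable D1 P := hD1sq.integrable one_le_two
  have iD0 : Integrable D0 P := hD0sq.integrable one_le_two
  have iYs1 : Integrable Ys1 P := hYs1sq.integrable one_le_two
  have iYs0 : Integrable Ys0 P := hYs0sq.integrable one_le_two
  have itY1sq : Integrable (fun ω => tY1 ω ^ 2) P := htY1sq.integrable_sq
  have itY0sq : Integrable (fun ω => tY0 ω ^ 2) P := htY0sq.integrable_sq
  have iD1sq : Integrable (fun ω => D1 ω ^ 2) P := hD1sq.integrable_sq
  have iD0sq : Integrable (fun ω => D0 ω ^ 2) P := hD0sq.integrable_sq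
  have itY1D1 : Integrable (fun ω => tY1 ω * D1 ω) P := aux_integrable_mul htY1sq hD1sq
  have itY0D0 : Integrable (fun ω => tY0 ω * D0 ω) P := aux_integrable_mul htY0sq hD0sq
  -- conditional expectation identities
  have hg1 : P[Ys1|mX] =ᵐ[P] fun ω => (P[tY1|mX]) ω - Δ * (P[D1|mX]) ω := by
    have h := aux_condexp_sub_mul hle itY1 iD1 Δ
    rw [← hYs1] at h; exact h
  have hg0 : P[Ys0|mX] =ᵐ[P] fun ω => (P[tY0|mX]) ω - Δ * (P[D0|mX]) ω := by
    have h := aux_condexp_sub_mul hle itY0 iD0 Δ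
    rw [← hYs0] at h; exact h
  have hq1 : P[fun ω => Ys1 ω ^ 2|mX] =ᵐ[P] fun ω =>
      (P[fun ω => tY1 ω ^ 2|mX]) ω - (2 * Δ) * ((P[fun ω => tY1 ω * D1 ω|mX]) ω)
        + (Δ ^ 2) * ((P[fun ω => D1 ω ^ 2|mX]) ω) := by
    have h0 : (fun ω => Ys1 ω ^ 2)
        =ᵐ[P] fun ω => tY1 ω ^ 2 - (2 * Δ) * (tY1 ω * D1 ω) + (Δ ^ 2) * (D1 ω ^ 2) :=
      Filter.Eventually.of_forall fun ω => by rw [hYs1]; ring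
    exact (condExp_congr_ae h0).trans (aux_condexp_lin hle itY1sq itY1D1 iD1sq (2 * Δ) (Δ ^ 2))
  have hq0 : P[fun ω => Ys0 ω ^ 2|mX] =ᵐ[P] fun ω =>
      (P[fun ω => tY0 ω ^ 2|mX]) ω - (2 * Δ) * ((P[fun ω => tY0 ω * D0 ω|mX]) ω)
        + (Δ ^ 2) * ((P[fun ω => D0 ω ^ 2|mX]) ω) := by
    have h0 : (fun ω => Ys0 ω ^ 2)
        =ᵐ[P] fun ω => tY0 ω ^ 2 - (2 * Δ) * (tY0 ω * D0 ω) + (Δ ^ 2) * (D0 ω ^ 2) :=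
      Filter.Eventually.of_forall fun ω => by rw [hYs0]; ring
    exact (condExp_congr_ae h0).trans (aux_condexp_lin hle itY0sq itY0D0 iD0sq (2 * Δ) (Δ ^ 2))
  -- integrability of condexp squares
  have ig1sq : Integrable (fun ω => ((P[Ys1|mX]) ω) ^ 2) P :=
    (aux_memℒp_two_condexp hle hYs1sq).integrable_sq
  have ig0sq : Integrable (fun ω => ((P[Ys0|mX]) ω) ^ 2) P :=
    (aux_memℒp_two_condexp hle hYs0sq).integrable_sq
  -- the first integral of V
  have hbig : (fun ω => ((((P[fun ω => tY1 ω ^ 2|mX]) ω - ((P[tY1|mX]) ω) ^ 2)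
              - 2 * Δ * ((P[fun ω => tY1 ω * D1 ω|mX]) ω - (P[tY1|mX]) ω * (P[D1|mX]) ω)
              + Δ ^ 2 * ((P[fun ω => D1 ω ^ 2|mX]) ω - ((P[D1|mX]) ω) ^ 2)) / (1 / 2)
            + (((P[fun ω => tY0 ω ^ 2|mX]) ω - ((P[tY0|mX]) ω) ^ 2)
              - 2 * Δ * ((P[fun ω => tY0 ω * D0 ω|mX]) ω - (P[tY0|mX]) ω * (P[D0|mX]) ω)
              + Δ ^ 2 * ((P[fun ω => D0 ω ^ 2|mX]) ω - ((P[D0|mX]) ω) ^ 2)) / (1 / 2)))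
      =ᵐ[P] fun ω => 2 * ((P[fun ω => Ys1 ω ^ 2|mX]) ω - ((P[Ys1|mX]) ω) ^ 2)
            + 2 * ((P[fun ω => Ys0 ω ^ 2|mX]) ω - ((P[Ys0|mX]) ω) ^ 2) := by
    filter_upwards [hq1, hq0, hg1, hg0] with ω e1 e2 e3 e4
    rw [e1, e2, e3, e4]
    ring
  have hI1 : (∫ ω, ((((P[fun ω => tY1 ω ^ 2|mX]) ω - ((P[tY1|mX]) ω) ^ 2)
              - 2 * Δ * ((P[fun ω => tY1 ω * D1 ω|mX]) ω - (P[tY1|mX]) ω * (P[D1|mX]) ω)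
              + Δ ^ 2 * ((P[fun ω => D1 ω ^ 2|mX]) ω - ((P[D1|mX]) ω) ^ 2)) / (1 / 2)
            + (((P[fun ω => tY0 ω ^ 2|mX]) ω - ((P[tY0|mX]) ω) ^ 2)
              - 2 * Δ * ((P[fun ω => tY0 ω * D0 ω|mX]) ω - (P[tY0|mX]) ω * (P[D0|mX]) ω)
              + Δ ^ 2 * ((P[fun ω => D0 ω ^ 2|mX]) ω - ((P[D0|mX]) ω) ^ 2)) / (1 / 2)) ∂P)
      = 2 * ((∫ ω, Ys1 ω ^ 2 ∂P) - ∫ ω, ((P[Ys1|mX]) ω) ^ 2 ∂P)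
        + 2 * ((∫ ω, Ys0 ω ^ 2 ∂P) - ∫ ω, ((P[Ys0|mX]) ω) ^ 2 ∂P) := by
    rw [integral_congr_ae hbig]
    have i1 : Integrable (fun ω => 2 * ((P[fun ω => Ys1 ω ^ 2|mX]) ω - ((P[Ys1|mX]) ω) ^ 2)) P :=
      (integrable_condExp.sub ig1sq).const_mul 2
    have i0 : Integrable (fun ω => 2 * ((P[fun ω => Ys0 ω ^ 2|mX]) ω - ((P[Ys0|mX]) ω) ^ 2)) P :=
      (integrable_condExp.sub ig0sq).const_mul 2
    rw [integral_add i1 i0, MeasureTheory.integral_const_mul, MeasureTheory.integral_const_mul,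
      integral_sub integrable_condExp ig1sq, integral_sub integrable_condExp ig0sq,
      integral_condExp hle, integral_condExp hle]
  -- the second integral of V
  have hbig2 : (fun ω => ((P[tY1|mX]) ω - (P[tY0|mX]) ω - Δ * (P[D1|mX]) ω
        + Δ * (P[D0|mX]) ω) ^ 2)
      =ᵐ[P] fun ω => ((P[Ys1|mX]) ω - (P[Ys0|mX]) ω) ^ 2 := by
    filter_upwards [hg1, hg0] with ω e3 e4
    rw [e3, e4]
    ring
  have hI2 : (∫ ω, ((P[tY1|mX]) ω - (P[tY0|mX]) ω - Δ * (P[D1|mX]) ω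
        + Δ * (P[D0|mX]) ω) ^ 2 ∂P)
      = ∫ ω, ((P[Ys1|mX]) ω - (P[Ys0|mX]) ω) ^ 2 ∂P := integral_congr_ae hbig2
  -- variance decompositions
  have hJ1 : (∫ ω, (Ys1 ω - (P[Ys1|mX]) ω) ^ 2 ∂P)
      = (∫ ω, Ys1 ω ^ 2 ∂P) - ∫ ω, ((P[Ys1|mX]) ω) ^ 2 ∂P :=
    aux_integral_sub_condexp_sq hle hYs1sq
  have hJ0 : (∫ ω, (Ys0 ω - (P[Ys0|mX]) ω) ^ 2 ∂P)
      = (∫ ω, Ys0 ω ^ 2 ∂P) - ∫ ω, ((P[Ys0|mX]) ω) ^ 2 ∂P :=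
    aux_integral_sub_condexp_sq hle hYs0sq
  -- equality of the means
  have hmu : (∫ x, Ys0 x ∂P) = ∫ x, Ys1 x ∂P := by
    have hDdiff : (fun ω => D1 ω - D0 ω)
        =ᵐ[P] fun ω => (if D1 ω = 1 ∧ D0 ω = 0 then (1 : ℝ) else 0) := by
      filter_upwards [hD1b, hD0b, hmono] with ω h1 h0 hm
      rcases h1 with h1 | h1 <;> rcases h0 with h0 | h0
      · norm_num [h1, h0]
      · rw [h1, h0] at hm; norm_num at hm
      · norm_num [h1, h0]
      · norm_num [h1, h0]
    have hindint : (∫ ω, (if D1 ω = 1 ∧ D0 ω = 0 then (1 : ℝ) else 0) ∂P) = pc := by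
      have he : (fun ω => (if D1 ω = 1 ∧ D0 ω = 0 then (1 : ℝ) else 0))
          = Set.indicator {ω | D1 ω = 1 ∧ D0 ω = 0} (1 : Ω → ℝ) := by
        funext ω
        by_cases h : D1 ω = 1 ∧ D0 ω = 0 <;> simp [Set.indicator_apply, Set.mem_setOf_eq, h]
      rw [he, @MeasureTheory.integral_indicator_one Ω m0 P _ hsmeas, hpc, measureReal_def]
    have hiind : Integrable (fun ω => (if D1 ω = 1 ∧ D0 ω = 0 then (1 : ℝ) else 0)) P := by
      have hm' : Measurable[m0] (fun ω => (if D1 ω = 1 ∧ D0 ω = 0 then (1 : ℝ) else 0)) :=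
        Measurable.ite hsmeas measurable_const measurable_const
      refine ((memLp_const (1 : ℝ)).of_le (hm'.aestronglyMeasurable (μ := P))
        ?_).integrable one_le_two
      filter_upwards with ω
      by_cases h : D1 ω = 1 ∧ D0 ω = 0 <;> simp [h]
    have hYdiff : (∫ ω, (Y1 ω - Y0 ω) * (if D1 ω = 1 ∧ D0 ω = 0 then (1 : ℝ) else 0) ∂P)
        = Δ * pc := by
      rw [hΔ]; field_simp
    have htYdiff : (fun ω => tY1 ω - tY0 ω)
        =ᵐ[P] fun ω => (Y1 ω - Y0 ω) * (if D1 ω = 1 ∧ D0 ω = 0 then (1 : ℝ) else 0) := by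
      filter_upwards [hDdiff] with ω h
      rw [htY1, htY0]
      simp only []
      rw [← h]
      ring
    have hT : (∫ ω, tY1 ω ∂P) - (∫ ω, tY0 ω ∂P) = Δ * pc := by
      rw [← integral_sub itY1 itY0, integral_congr_ae htYdiff, hYdiff]
    have hD : (∫ ω, D1 ω ∂P) - (∫ ω, D0 ω ∂P) = pc := by
      rw [← integral_sub iD1 iD0, integral_congr_ae hDdiff, hindint]
    have h1 : (∫ x, Ys1 x ∂P) = (∫ ω, tY1 ω ∂P) - Δ * ∫ ω, D1 ω ∂P := by
      rw [hYs1, integral_sub itY1 (iD1.const_mul Δ), MeasureTheory.integral_const_mul]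
    have h0 : (∫ x, Ys0 x ∂P) = (∫ ω, tY0 ω ∂P) - Δ * ∫ ω, D0 ω ∂P := by
      rw [hYs0, integral_sub itY0 (iD0.const_mul Δ), MeasureTheory.integral_const_mul]
    rw [h1, h0]
    linear_combination (-1 : ℝ) * hT + Δ * hD
  have hJ2 : (∫ ω, (((P[Ys1|mX]) ω - ∫ x, Ys1 x ∂P)
              - ((P[Ys0|mX]) ω - ∫ x, Ys0 x ∂P)) ^ 2 ∂P)
      = ∫ ω, ((P[Ys1|mX]) ω - (P[Ys0|mX]) ω) ^ 2 ∂P := by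
    have he : (fun ω => (((P[Ys1|mX]) ω - ∫ x, Ys1 x ∂P)
              - ((P[Ys0|mX]) ω - ∫ x, Ys0 x ∂P)) ^ 2)
        = fun ω => ((P[Ys1|mX]) ω - (P[Ys0|mX]) ω) ^ 2 := by
      funext ω; rw [hmu]; ring
    rw [he]
  rw [hV, hν2, hI1, hI2, hJ1, hJ0, hJ2]
  ring
end

section
/- Let Y ∈ ℝ^n, let 𝕏₁, ℤ₁ be n × k₁ real matrices, let 𝕏₂ be an n × k₂ real matrix, and set 𝕏 = (𝕏₁ 𝕏₂), ℤ = (ℤ₁ 𝕏₂). Assume ℤ'𝕏 and 𝕏₂'𝕏₂ are invertible. Let ℙ₂ = 𝕏₂(𝕏₂'𝕏₂)^{−1}𝕏₂', 𝕄₂ = I − ℙ₂, Z̃₁ = 𝕄₂ℤ₁, X̃₁ = 𝕄₂𝕏₁, and assume Z̃₁'X̃₁ is invertible. Let (β̂₁, β̂₂) = (ℤ'𝕏)^{−1}ℤ'Y denote the IV estimator and ε̂ = Y − 𝕏₁β̂₁ − 𝕏₂β̂₂ the residual vector, and define the heteroskedasticity-robust variance estimator Ω̂ = (ℤ'𝕏)^{−1}(ℤ'·diag(ε̂₁²,…,ε̂ₙ²)·ℤ)(𝕏'ℤ)^{−1}.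 Then the upper-left k₁ × k₁ block of Ω̂ equals (Z̃₁'X̃₁)^{−1}(Z̃₁'·diag(ε̂₁²,…,ε̂ₙ²)·Z̃₁)(X̃₁'Z̃₁)^{−1}. -/
open Matrix

/-- Frisch–Waugh–Lovell for the IV sandwich variance.
With `𝕏 = (𝕏₁ 𝕏₂)`, `ℤ = (ℤ₁ 𝕏₂)`, `𝕄₂ = I − 𝕏₂(𝕏₂'𝕏₂)⁻¹𝕏₂'`, `Z̃₁ = 𝕄₂ℤ₁`,
`X̃₁ = 𝕄₂𝕏₁`, IV estimator `β̂ = (ℤ'𝕏)⁻¹ℤ'Y`, residuals `ε̂ = Y − 𝕏β̂`, and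
`Ω̂ = (ℤ'𝕏)⁻¹(ℤ'·diag(ε̂²)·ℤ)(𝕏'ℤ)⁻¹`, the upper-left `k₁ × k₁` block of `Ω̂` equals
`(Z̃₁'X̃₁)⁻¹(Z̃₁'·diag(ε̂²)·Z̃₁)(X̃₁'Z̃₁)⁻¹`. -/
theorem fwl_iv_robust_variance_block
    {n k1 k2 : Type*} [Fintype n] [Fintype k1] [Fintype k2]
    [DecidableEq n] [DecidableEq k1] [DecidableEq k2]
    (Y : n → ℝ) (X1 Z1 : Matrix n k1 ℝ) (X2 : Matrix n k2 ℝ)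
    (X : Matrix n (k1 ⊕ k2) ℝ) (Z : Matrix n (k1 ⊕ k2) ℝ)
    (hX : X = fromCols X1 X2) (hZ : Z = fromCols Z1 X2)
    (hZX : IsUnit (Zᵀ * X).det) (hX2 : IsUnit (X2ᵀ * X2).det)
    (M2 : Matrix n n ℝ) (hM2 : M2 = 1 - X2 * (X2ᵀ * X2)⁻¹ * X2ᵀ)
    (Zt1 Xt1 : Matrix n k1 ℝ) (hZt1 : Zt1 = M2 * Z1) (hXt1 : Xt1 = M2 * X1)
    (hZtXt : IsUnit (Zt1ᵀ * Xt1).det)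
    (βhat : (k1 ⊕ k2) → ℝ) (hβ : βhat = (Zᵀ * X)⁻¹ *ᵥ (Zᵀ *ᵥ Y))
    (εhat : n → ℝ) (hε : εhat = Y - X *ᵥ βhat)
    (Ωhat : Matrix (k1 ⊕ k2) (k1 ⊕ k2) ℝ)
    (hΩ : Ωhat = (Zᵀ * X)⁻¹ * (Zᵀ * diagonal (fun i => εhat i ^ 2) * Z) * (Xᵀ * Z)⁻¹) :
    Ωhat.toBlocks₁₁
      = (Zt1ᵀ * Xt1)⁻¹ * (Zt1ᵀ * diagonal (fun i => εhat i ^ 2) * Zt1) * (Xt1ᵀ * Zt1)⁻¹ := by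
  set D : Matrix n n ℝ := diagonal (fun i => εhat i ^ 2) with hD
  set H : Matrix k2 k2 ℝ := (X2ᵀ * X2)⁻¹ with hH
  set Q : Matrix k1 k2 ℝ := Z1ᵀ * X2 with hQ
  set R : Matrix k2 k1 ℝ := X2ᵀ * X1 with hR
  set A : Matrix k1 k1 ℝ := (Zt1ᵀ * Xt1)⁻¹ with hA
  have hSH : (X2ᵀ * X2) * H = 1 := mul_nonsing_inv _ hX2
  have hHt : Hᵀ = H := by
    rw [hH, transpose_nonsing_inv, transpose_mul, transpose_transpose]
  have hM2t : M2ᵀ = M2 := by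
    rw [hM2]
    simp [transpose_sub, transpose_mul, hHt, Matrix.mul_assoc]
  -- M2 is idempotent
  have hM2idem : M2 * M2 = M2 := by
    rw [hM2]
    simp only [Matrix.sub_mul, Matrix.mul_sub, Matrix.one_mul, Matrix.mul_one]
    have : X2 * H * X2ᵀ * (X2 * H * X2ᵀ) = X2 * H * X2ᵀ := by
      calc X2 * H * X2ᵀ * (X2 * H * X2ᵀ)
          = X2 * H * ((X2ᵀ * X2) * H) * X2ᵀ := by
            simp only [Matrix.mul_assoc]
        _ = X2 * H * X2ᵀ := by rw [hSH]; simp [Matrix.mul_assoc]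
    rw [this]
    abel
  have hZt1T : Zt1ᵀ = Z1ᵀ * M2 := by rw [hZt1, transpose_mul, hM2t]
  have hZtXtF : Zt1ᵀ * Xt1 = Z1ᵀ * M2 * X1 := by
    rw [hZt1T, hXt1, Matrix.mul_assoc, Matrix.mul_assoc, ← Matrix.mul_assoc M2, hM2idem]
  have hFA : (Z1ᵀ * M2 * X1) * A = 1 := by
    rw [← hZtXtF, hA, mul_nonsing_inv _ hZtXt]
  have hFA1 : Z1ᵀ * (M2 * (X1 * A)) = 1 := by
    rw [← Matrix.mul_assoc, ← Matrix.mul_assoc]; exact hFA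
  have hFAk2 : ∀ B : Matrix k1 k2 ℝ, Z1ᵀ * (M2 * (X1 * (A * B))) = B := by
    intro B
    calc Z1ᵀ * (M2 * (X1 * (A * B))) = Z1ᵀ * M2 * X1 * A * B := by
          simp only [Matrix.mul_assoc]
      _ = B := by rw [hFA, Matrix.one_mul]
  have hSH0 : X2ᵀ * (X2 * H) = 1 := by rw [← Matrix.mul_assoc]; exact hSH
  have hSHk1 : ∀ B : Matrix k2 k1 ℝ, X2ᵀ * (X2 * (H * B)) = B := by
    intro B
    calc X2ᵀ * (X2 * (H * B)) = X2ᵀ * X2 * H * B := by simp only [Matrix.mul_assoc]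
      _ = B := by rw [hSH, Matrix.one_mul]
  have hSHk2 : ∀ B : Matrix k2 k2 ℝ, X2ᵀ * (X2 * (H * B)) = B := by
    intro B
    calc X2ᵀ * (X2 * (H * B)) = X2ᵀ * X2 * H * B := by simp only [Matrix.mul_assoc]
      _ = B := by rw [hSH, Matrix.one_mul]
  -- Z1ᵀ * X1 in terms of the Schur complement
  have hZ1X1 : Z1ᵀ * X1 = Z1ᵀ * M2 * X1 + Q * H * R := by
    rw [hM2, hQ, hR]
    simp only [Matrix.mul_sub, Matrix.sub_mul, Matrix.mul_one, Matrix.one_mul,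
      Matrix.mul_assoc]
    abel
  -- the explicit inverse of Zᵀ X
  set G : Matrix (k1 ⊕ k2) (k1 ⊕ k2) ℝ :=
    fromBlocks A (-(A * Q * H)) (-(H * R * A)) (H + H * R * A * Q * H) with hG
  have hZXblocks : Zᵀ * X = fromBlocks (Z1ᵀ * X1) Q R (X2ᵀ * X2) := by
    rw [hZ, hX, transpose_fromCols, fromRows_mul_fromCols, hQ, hR]
  have hTL : Z1ᵀ * X1 * A + Q * -(H * R * A) = 1 := by
    rw [hZ1X1, Matrix.add_mul]
    simp only [Matrix.mul_neg, Matrix.mul_assoc, hFA1]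
    abel
  have hTR : Z1ᵀ * X1 * -(A * Q * H) + Q * (H + H * R * A * Q * H) = 0 := by
    rw [hZ1X1]
    simp only [Matrix.add_mul, Matrix.mul_add, Matrix.mul_neg, Matrix.mul_assoc, hFAk2]
    abel
  have hBL : R * A + X2ᵀ * X2 * -(H * R * A) = 0 := by
    simp only [Matrix.mul_neg, Matrix.mul_assoc, hSHk1]
    abel
  have hBR : R * -(A * Q * H) + X2ᵀ * X2 * (H + H * R * A * Q * H) = 1 := by
    simp only [Matrix.mul_add, Matrix.mul_neg, Matrix.mul_assoc, hSH0, hSHk2]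
    abel
  have hGinv : (Zᵀ * X)⁻¹ = G := by
    apply inv_eq_right_inv
    rw [hZXblocks, hG, fromBlocks_multiply, hTL, hTR, hBL, hBR, fromBlocks_one]
  have hXZinv : (Xᵀ * Z)⁻¹ = Gᵀ := by
    have h : Xᵀ * Z = (Zᵀ * X)ᵀ := by rw [transpose_mul, transpose_transpose]
    rw [h, ← transpose_nonsing_inv, hGinv]
  -- the first block row of G * Zᵀ
  have hW1 : A * Z1ᵀ + -(A * Q * H) * X2ᵀ = A * Zt1ᵀ := by
    rw [hZt1T, hM2, hQ]
    simp only [Matrix.mul_sub, Matrix.mul_one, Matrix.neg_mul, Matrix.mul_assoc]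
    abel
  have hGZ : G * Zᵀ = fromRows (A * Zt1ᵀ)
      (-(H * R * A) * Z1ᵀ + (H + H * R * A * Q * H) * X2ᵀ) := by
    rw [hZ, transpose_fromCols, hG, fromBlocks_mul_fromRows, hW1]
  set W2 : Matrix k2 n ℝ := -(H * R * A) * Z1ᵀ + (H + H * R * A * Q * H) * X2ᵀ with hW2
  have hΩ' : Ωhat = fromRows (A * Zt1ᵀ) W2 * D * (fromRows (A * Zt1ᵀ) W2)ᵀ := by
    rw [hΩ, hGinv, hXZinv, ← hGZ]
    simp only [transpose_mul, transpose_transpose, Matrix.mul_assoc]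
  have hAT : (A * Zt1ᵀ)ᵀ = Zt1 * (Xt1ᵀ * Zt1)⁻¹ := by
    rw [transpose_mul, transpose_transpose, hA, transpose_nonsing_inv, transpose_mul,
      transpose_transpose]
  rw [hΩ', transpose_fromRows, fromRows_mul, fromRows_mul_fromCols,
    toBlocks_fromBlocks₁₁, hAT]
  simp only [Matrix.mul_assoc]
end

section
/- Consider data (Y_i, D_i, A_i, ζ_i), i = 1,…,2n, with Y_i ∈ ℝ, D_i, A_i ∈ {0,1}, ζ_i ∈ ℝ^p, and pairs {π(2j−1), π(2j)}, j = 1,…,n, for a permutation π of {1,…,2n}. Let (α̂ⁿ_Y, β̂ⁿ_Y) be the OLS estimators of the coefficients on A_i and ζ_i in the regression of Y_i on A_i, ζ_i, and the n pair dummies, and (α̂ⁿ_D, β̂ⁿ_D) the analogous OLS estimators with D_i as outcome; let α̂ⁿ_IV be the two-stage least squares estimator of the coefficient on D_i in the regression of Y_i on D_i, ζ_i, and the n pair dummies, using A_i as instrument for D_i. Assume all these estimators are well defined (the relevant normal/moment matrices are invertible) and α̂ⁿ_D ≠ 0. Then α̂ⁿ_Y = ψ̂ⁿ_adj(1) − ψ̂ⁿ_adj(0)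 and α̂ⁿ_D = φ̂ⁿ_adj(1) − φ̂ⁿ_adj(0) for the linear working models m̂_{a,Ỹ}(·) evaluated as ζ_i'β̂ⁿ_Y and m̂_{a,D}(·) evaluated as ζ_i'β̂ⁿ_D, and consequently α̂ⁿ_IV = α̂ⁿ_Y/α̂ⁿ_D = Δ̂ⁿ_adj. -/
open Matrix
open scoped Classical


lemma sum_pairs (n : ℕ) (f : Fin (2 * n) → ℝ) :
    ∑ i : Fin (2 * n), f i
      = ∑ j : Fin n, (f ⟨2 * (j : ℕ), by have := j.isLt; linarith⟩
          + f ⟨2 * (j : ℕ) + 1, by have := j.isLt; linarith⟩) := by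
  rw [← Equiv.sum_comp (finProdFinEquiv.trans (finCongr (by ring : n * 2 = 2 * n))) f,
    Fintype.sum_prod_type]
  refine Finset.sum_congr rfl fun j _ => ?_
  rw [Fin.sum_univ_two]
  congr 1 <;> (congr 1; apply Fin.ext; simp [finProdFinEquiv]; try omega)

lemma key (n : ℕ)
    (Av e resid : Fin (2 * n) → ℝ)
    (π : Equiv.Perm (Fin (2 * n)))
    (hA01 : ∀ i, Av i = 0 ∨ Av i = 1)
    (hpair : ∀ j : Fin n,
      Av (π ⟨2 * (j : ℕ), by have := j.isLt; linarith⟩)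
        + Av (π ⟨2 * (j : ℕ) + 1, by have := j.isLt; linarith⟩) = 1)
    (α : ℝ) (γ : Fin n → ℝ)
    (hresid : ∀ i, resid i = e i - Av i * α
        - ∑ j : Fin n, (if π ⟨2 * (j : ℕ), by have := j.isLt; linarith⟩ = i
            ∨ π ⟨2 * (j : ℕ) + 1, by have := j.isLt; linarith⟩ = i then (1:ℝ) else 0) * γ j)
    (hAeq : ∑ i, Av i * resid i = 0)
    (hDeq : ∀ j : Fin n,
      resid (π ⟨2 * (j : ℕ), by have := j.isLt; linarith⟩)
        + resid (π ⟨2 * (j : ℕ) + 1, by have := j.isLt; linarith⟩) = 0) :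
    (n : ℝ) * α = ∑ i, (2 * Av i - 1) * e i := by
  -- notation for pair members
  set u : Fin n → Fin (2 * n) := fun j => π ⟨2 * (j : ℕ), by have := j.isLt; linarith⟩ with hu
  set v : Fin n → Fin (2 * n) := fun j => π ⟨2 * (j : ℕ) + 1, by have := j.isLt; linarith⟩ with hv
  -- dummy sums collapse
  have hcollapse : ∀ (i : Fin (2 * n)) (j : Fin n), (u j = i ∨ v j = i) →
      (∑ j' : Fin n, (if u j' = i ∨ v j' = i then (1:ℝ) else 0) * γ j') = γ j := by
    intro i j hij
    rw [Finset.sum_eq_single j]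
    · simp [hij]
    · intro j' _ hne
      have h1 : u j' ≠ i := by
        rcases hij with h | h
        · rw [← h]; intro hc
          have := congrArg Fin.val (π.injective hc)
          simp at this
          exact hne (Fin.ext (by omega))
        · rw [← h]; intro hc
          have := congrArg Fin.val (π.injective hc)
          simp at this; omega
      have h2 : v j' ≠ i := by
        rcases hij with h | h
        · rw [← h]; intro hc
          have := congrArg Fin.val (π.injective hc)
          simp at this; omega
        · rw [← h]; intro hc
          have := congrArg Fin.val (π.injective hc)
          simp at this
          exact hne (Fin.ext (by omega))
      simp [h1, h2]
    · simp
  have hru : ∀ j, resid (u j) = e (u j) - Av (u j) * α - γ j := by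
    intro j; rw [hresid (u j), hcollapse (u j) j (Or.inl rfl)]
  have hrv : ∀ j, resid (v j) = e (v j) - Av (v j) * α - γ j := by
    intro j; rw [hresid (v j), hcollapse (v j) j (Or.inr rfl)]
  have hγ : ∀ j, γ j = (e (u j) + e (v j) - α) / 2 := by
    intro j
    have h := hDeq j
    rw [hru j, hrv j] at h
    have hp := hpair j
    rw [show Av (π ⟨2 * (j : ℕ), by have := j.isLt; linarith⟩) = Av (u j) from rfl,
      show Av (π ⟨2 * (j : ℕ) + 1, by have := j.isLt; linarith⟩) = Av (v j) from rfl] at hp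
    have hα : Av (u j) * α + Av (v j) * α = α := by
      have := congrArg (· * α) hp
      simpa [add_mul] using this
    linarith
  -- per-pair identity for the A-equation
  have hAper : ∀ j, Av (u j) * resid (u j) + Av (v j) * resid (v j)
      = ((2 * Av (u j) - 1) * e (u j) + (2 * Av (v j) - 1) * e (v j) - α) / 2 := by
    intro j
    have hp := hpair j
    rw [show Av (π ⟨2 * (j : ℕ), by have := j.isLt; linarith⟩) = Av (u j) from rfl,
      show Av (π ⟨2 * (j : ℕ) + 1, by have := j.isLt; linarith⟩) = Av (v j) from rfl] at hp
    rcases hA01 (u j) with h1 | h1 <;> rcases hA01 (v j) with h2 | h2 <;>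
      rw [hru j, hrv j, hγ j] <;> rw [h1, h2] at hp ⊢ <;> ring_nf <;> nlinarith
  have hsumA : ∑ i, Av i * resid i
      = ∑ j, (Av (u j) * resid (u j) + Av (v j) * resid (v j)) :=
    by rw [← Equiv.sum_comp π (fun i => Av i * resid i), sum_pairs]
  have hsumE : ∑ i, (2 * Av i - 1) * e i
      = ∑ j, ((2 * Av (u j) - 1) * e (u j) + (2 * Av (v j) - 1) * e (v j)) :=
    by rw [← Equiv.sum_comp π (fun i => (2 * Av i - 1) * e i), sum_pairs]
  rw [hsumA] at hAeq
  simp only [hAper] at hAeq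
  rw [← Finset.sum_div] at hAeq
  have h2 : ∑ j : Fin n, ((2 * Av (u j) - 1) * e (u j) + (2 * Av (v j) - 1) * e (v j) - α) = 0 := by
    linarith
  rw [Finset.sum_sub_distrib] at h2
  simp only [Finset.sum_const, Finset.card_univ, Fintype.card_fin, nsmul_eq_mul] at h2
  rw [hsumE]
  linarith

lemma alpha_eq (n p : ℕ)
    (Yv Av : Fin (2 * n) → ℝ) (ζ : Fin (2 * n) → Fin p → ℝ)
    (π : Equiv.Perm (Fin (2 * n)))
    (hA01 : ∀ i, Av i = 0 ∨ Av i = 1)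
    (hpair : ∀ j : Fin n,
      Av (π ⟨2 * (j : ℕ), by have := j.isLt; linarith⟩)
        + Av (π ⟨2 * (j : ℕ) + 1, by have := j.isLt; linarith⟩) = 1)
    (R : Matrix (Fin (2 * n)) (Unit ⊕ Fin p ⊕ Fin n) ℝ)
    (hR : R = fun i => Sum.elim (fun _ => Av i) (Sum.elim (fun q => ζ i q)
      (fun j : Fin n => if π ⟨2 * (j : ℕ), by have := j.isLt; linarith⟩ = i
          ∨ π ⟨2 * (j : ℕ) + 1, by have := j.isLt; linarith⟩ = i then (1:ℝ) else 0)))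
    (hRinv : IsUnit (Rᵀ * R).det)
    (coef : (Unit ⊕ Fin p ⊕ Fin n) → ℝ)
    (hcoef : coef = (Rᵀ * R)⁻¹ *ᵥ (Rᵀ *ᵥ Yv)) :
    (n : ℝ) * coef (Sum.inl ())
      = ∑ i, (2 * Av i - 1) * (Yv i - ζ i ⬝ᵥ fun q => coef (Sum.inr (Sum.inl q))) := by
  set β : Fin p → ℝ := fun q => coef (Sum.inr (Sum.inl q)) with hβ
  set γ : Fin n → ℝ := fun j => coef (Sum.inr (Sum.inr j)) with hγ
  have hnormal : (Rᵀ * R) *ᵥ coef = Rᵀ *ᵥ Yv := by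
    rw [hcoef, Matrix.mulVec_mulVec, Matrix.mul_nonsing_inv _ hRinv, Matrix.one_mulVec]
  set resid : Fin (2 * n) → ℝ := fun i => Yv i - (R *ᵥ coef) i with hres
  have horth : ∀ s, ∑ i, R i s * resid i = 0 := by
    intro s
    have h1 : Rᵀ *ᵥ (Yv - R *ᵥ coef) = 0 := by
      rw [Matrix.mulVec_sub, Matrix.mulVec_mulVec, hnormal, sub_self]
    have h2 := congrFun h1 s
    simpa [Matrix.mulVec, dotProduct, Matrix.transpose_apply, resid] using h2
  have hRcoef : ∀ i, (R *ᵥ coef) i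
      = Av i * coef (Sum.inl ()) + ζ i ⬝ᵥ β
        + ∑ j : Fin n, (if π ⟨2 * (j : ℕ), by have := j.isLt; linarith⟩ = i
            ∨ π ⟨2 * (j : ℕ) + 1, by have := j.isLt; linarith⟩ = i then (1:ℝ) else 0) * γ j := by
    intro i
    simp [hR, Matrix.mulVec, dotProduct, Fintype.sum_sum_type, hβ, hγ, ite_mul, one_mul, zero_mul, add_assoc]
  have hA' : ∑ i, Av i * resid i = 0 := by
    have h := horth (Sum.inl ())
    simpa [hR] using h
  have hD' : ∀ j : Fin n,
      resid (π ⟨2 * (j : ℕ), by have := j.isLt; linarith⟩)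
        + resid (π ⟨2 * (j : ℕ) + 1, by have := j.isLt; linarith⟩) = 0 := by
    intro j
    have h := horth (Sum.inr (Sum.inr j))
    have huv : π ⟨2 * (j : ℕ), by have := j.isLt; linarith⟩
        ≠ π ⟨2 * (j : ℕ) + 1, by have := j.isLt; linarith⟩ := by
      intro hc
      have := congrArg Fin.val (π.injective hc)
      simp at this
    simp only [hR, Sum.elim_inr, ite_mul, one_mul, zero_mul] at h
    have hsplit : ∀ i : Fin (2 * n),
        (if π ⟨2 * (j : ℕ), by have := j.isLt; linarith⟩ = i
            ∨ π ⟨2 * (j : ℕ) + 1, by have := j.isLt; linarith⟩ = i then resid i else 0)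
        = (if π ⟨2 * (j : ℕ), by have := j.isLt; linarith⟩ = i then resid i else 0)
          + (if π ⟨2 * (j : ℕ) + 1, by have := j.isLt; linarith⟩ = i then resid i else 0) := by
      intro i
      by_cases h1 : π ⟨2 * (j : ℕ), by have := j.isLt; linarith⟩ = i <;>
        by_cases h2 : π ⟨2 * (j : ℕ) + 1, by have := j.isLt; linarith⟩ = i <;>
        simp [h1, h2]
      exact absurd (h1.trans h2.symm) huv
    simp only [hsplit] at h
    rw [Finset.sum_add_distrib, Finset.sum_ite_eq, Finset.sum_ite_eq] at h
    simpa using h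
  have hres' : ∀ i, resid i = (Yv i - ζ i ⬝ᵥ β) - Av i * coef (Sum.inl ())
      - ∑ j : Fin n, (if π ⟨2 * (j : ℕ), by have := j.isLt; linarith⟩ = i
          ∨ π ⟨2 * (j : ℕ) + 1, by have := j.isLt; linarith⟩ = i then (1:ℝ) else 0) * γ j := by
    intro i
    have := hRcoef i
    simp only [hres]
    rw [this]; ring
  exact key n Av (fun i => Yv i - ζ i ⬝ᵥ β) resid π hA01 hpair
    (coef (Sum.inl ())) γ hres' hA' hD'

/-- In a matched-pairs sample of `2n` units with pairs
`{π(2j), π(2j+1)}`, `j < n`, exactly one treated unit per pair, the OLS coefficients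
`α̂_Y, α̂_D` on `A` in the pair-fixed-effects regressions of `Y` and `D` on `A`, `ζ` and the
pair dummies satisfy `α̂_Y = ψ̂_adj(1) − ψ̂_adj(0)` and `α̂_D = φ̂_adj(1) − φ̂_adj(0)` for the
linear working models `ζ_i'β̂_Y`, `ζ_i'β̂_D`, and the two-stage least squares coefficient
`α̂_IV` on `D` (instrumented by `A`, with `ζ` and pair dummies) equals
`α̂_Y/α̂_D = Δ̂_adj`. -/
theorem tsls_pfe_equals_adjusted_wald
    (n p : ℕ) (hn : 0 < n)
    (Yv Dv Av : Fin (2 * n) → ℝ) (ζ : Fin (2 * n) → Fin p → ℝ)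
    (π : Equiv.Perm (Fin (2 * n)))
    (hA01 : ∀ i, Av i = 0 ∨ Av i = 1)
    (hpair : ∀ j : Fin n,
      Av (π ⟨2 * (j : ℕ), by have := j.isLt; omega⟩)
        + Av (π ⟨2 * (j : ℕ) + 1, by have := j.isLt; omega⟩) = 1)
    (Dum : Matrix (Fin (2 * n)) (Fin n) ℝ)
    (hDum : Dum = fun (i : Fin (2 * n)) (j : Fin n) =>
      if π ⟨2 * (j : ℕ), by have := j.isLt; omega⟩ = i
          ∨ π ⟨2 * (j : ℕ) + 1, by have := j.isLt; omega⟩ = i then (1 : ℝ) else 0)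
    (R Xm : Matrix (Fin (2 * n)) (Unit ⊕ Fin p ⊕ Fin n) ℝ)
    (hR : R = fun i => Sum.elim (fun _ => Av i) (Sum.elim (fun q => ζ i q) (fun j => Dum i j)))
    (hXm : Xm = fun i => Sum.elim (fun _ => Dv i) (Sum.elim (fun q => ζ i q) (fun j => Dum i j)))
    (hRinv : IsUnit (Rᵀ * R).det) (hIVinv : IsUnit (Rᵀ * Xm).det)
    (coefY coefD coefIV : (Unit ⊕ Fin p ⊕ Fin n) → ℝ)
    (hcoefY : coefY = (Rᵀ * R)⁻¹ *ᵥ (Rᵀ *ᵥ Yv))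
    (hcoefD : coefD = (Rᵀ * R)⁻¹ *ᵥ (Rᵀ *ᵥ Dv))
    (hcoefIV : coefIV = (Rᵀ * Xm)⁻¹ *ᵥ (Rᵀ *ᵥ Yv))
    (αY αD αIV : ℝ) (βY βD : Fin p → ℝ)
    (hαY : αY = coefY (Sum.inl ())) (hαD : αD = coefD (Sum.inl ()))
    (hαIV : αIV = coefIV (Sum.inl ()))
    (hβY : βY = fun q => coefY (Sum.inr (Sum.inl q)))
    (hβD : βD = fun q => coefD (Sum.inr (Sum.inl q)))
    (hαDne : αD ≠ 0)
    (ψ1 ψ0 φ1 φ0 : ℝ)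
    (hψ1 : ψ1 = (2 * (n : ℝ))⁻¹ * ∑ i : Fin (2 * n),
      (2 * (if Av i = 1 then (1 : ℝ) else 0) * (Yv i - ζ i ⬝ᵥ βY) + ζ i ⬝ᵥ βY))
    (hψ0 : ψ0 = (2 * (n : ℝ))⁻¹ * ∑ i : Fin (2 * n),
      (2 * (if Av i = 0 then (1 : ℝ) else 0) * (Yv i - ζ i ⬝ᵥ βY) + ζ i ⬝ᵥ βY))
    (hφ1 : φ1 = (2 * (n : ℝ))⁻¹ * ∑ i : Fin (2 * n),
      (2 * (if Av i = 1 then (1 : ℝ) else 0) * (Dv i - ζ i ⬝ᵥ βD) + ζ i ⬝ᵥ βD))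
    (hφ0 : φ0 = (2 * (n : ℝ))⁻¹ * ∑ i : Fin (2 * n),
      (2 * (if Av i = 0 then (1 : ℝ) else 0) * (Dv i - ζ i ⬝ᵥ βD) + ζ i ⬝ᵥ βD)) :
    αY = ψ1 - ψ0 ∧ αD = φ1 - φ0 ∧ αIV = αY / αD ∧ αIV = (ψ1 - ψ0) / (φ1 - φ0) := by
  have hnR : (0 : ℝ) < n := by exact_mod_cast hn
  have hRform : R = fun i => Sum.elim (fun _ => Av i) (Sum.elim (fun q => ζ i q)
      (fun j : Fin n => if π ⟨2 * (j : ℕ), by have := j.isLt; omega⟩ = i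
          ∨ π ⟨2 * (j : ℕ) + 1, by have := j.isLt; omega⟩ = i then (1:ℝ) else 0)) := by
    rw [hR, hDum]
  have hY := alpha_eq n p Yv Av ζ π hA01 hpair R hRform hRinv coefY hcoefY
  have hD := alpha_eq n p Dv Av ζ π hA01 hpair R hRform hRinv coefD hcoefD
  rw [← hβY] at hY
  rw [← hβD] at hD
  rw [← hαY] at hY
  rw [← hαD] at hD
  -- αY = ψ1 - ψ0
  have hdiff : ∀ (W : Fin (2 * n) → ℝ) (β : Fin p → ℝ),
      ((2 * (n : ℝ))⁻¹ * ∑ i : Fin (2 * n),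
        (2 * (if Av i = 1 then (1 : ℝ) else 0) * (W i - ζ i ⬝ᵥ β) + ζ i ⬝ᵥ β))
      - ((2 * (n : ℝ))⁻¹ * ∑ i : Fin (2 * n),
        (2 * (if Av i = 0 then (1 : ℝ) else 0) * (W i - ζ i ⬝ᵥ β) + ζ i ⬝ᵥ β))
      = (n : ℝ)⁻¹ * ∑ i : Fin (2 * n), (2 * Av i - 1) * (W i - ζ i ⬝ᵥ β) := by
    intro W β
    rw [← mul_sub, ← Finset.sum_sub_distrib]
    have hterm : ∀ i : Fin (2 * n),
        (2 * (if Av i = 1 then (1 : ℝ) else 0) * (W i - ζ i ⬝ᵥ β) + ζ i ⬝ᵥ β)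
          - (2 * (if Av i = 0 then (1 : ℝ) else 0) * (W i - ζ i ⬝ᵥ β) + ζ i ⬝ᵥ β)
        = 2 * ((2 * Av i - 1) * (W i - ζ i ⬝ᵥ β)) := by
      intro i
      rcases hA01 i with h | h <;> rw [h] <;> norm_num <;> ring
    rw [Finset.sum_congr rfl fun i _ => hterm i, ← Finset.mul_sum, ← mul_assoc]
    congr 1
    field_simp
  have hψ : αY = ψ1 - ψ0 := by
    rw [hψ1, hψ0, hdiff Yv βY, ← hY]
    field_simp
  have hφ : αD = φ1 - φ0 := by
    rw [hφ1, hφ0, hdiff Dv βD, ← hD]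
    field_simp
  -- IV part
  have hnY : (Rᵀ * R) *ᵥ coefY = Rᵀ *ᵥ Yv := by
    rw [hcoefY, Matrix.mulVec_mulVec, Matrix.mul_nonsing_inv _ hRinv, Matrix.one_mulVec]
  have hnD : (Rᵀ * R) *ᵥ coefD = Rᵀ *ᵥ Dv := by
    rw [hcoefD, Matrix.mulVec_mulVec, Matrix.mul_nonsing_inv _ hRinv, Matrix.one_mulVec]
  set Δ : ℝ := αY / αD with hΔ
  set c : (Unit ⊕ Fin p ⊕ Fin n) → ℝ := fun s => coefY s - Δ * coefD s with hc
  set coef' : (Unit ⊕ Fin p ⊕ Fin n) → ℝ :=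
    Sum.elim (fun _ => Δ) (fun t => c (Sum.inr t)) with hcoef'
  have hczero : c (Sum.inl ()) = 0 := by
    simp only [hc, ← hαY, ← hαD, hΔ]
    field_simp
    ring
  have hXc : Xm *ᵥ coef' = Δ • Dv + R *ᵥ c := by
    funext i
    simp only [Matrix.mulVec, dotProduct, hXm, hR, Fintype.sum_sum_type,
      Finset.univ_unique, Finset.sum_singleton, Sum.elim_inl, Sum.elim_inr,
      Pi.add_apply, Pi.smul_apply, smul_eq_mul, hcoef']
    rw [show (default : Unit) = () from rfl]
    rw [hczero]
    ring
  have hIVnormal : (Rᵀ * Xm) *ᵥ coef' = Rᵀ *ᵥ Yv := by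
    rw [← Matrix.mulVec_mulVec, hXc, Matrix.mulVec_add, Matrix.mulVec_smul]
    have hcsplit : c = coefY - Δ • coefD := by
      funext s; simp [hc]
    rw [hcsplit, Matrix.mulVec_mulVec, Matrix.mulVec_sub, Matrix.mulVec_smul, hnY, hnD]
    abel
  have hcoef'eq : coefIV = coef' := by
    rw [hcoefIV, ← hIVnormal, Matrix.mulVec_mulVec, Matrix.nonsing_inv_mul _ hIVinv,
      Matrix.one_mulVec]
  have hIV : αIV = αY / αD := by
    rw [hαIV, hcoef'eq]
    simp [hcoef', hΔ]
  exact ⟨hψ, hφ, hIV, by rw [hIV, hψ, hφ]⟩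
end
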